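/- arXiv:0804.3000 — 7 statements merged into one kernel-verified Lean document; each statement's English description precedes it below -/
import Mathlib

section
/- Let p, q ∈ (1,∞), α = p/q, and let μ be a nonnegative Borel measure on the right half-plane ℂ_+. Suppose there is M > 0 such that for all λ with Re(λ) > 0, (∫_{ℂ_+} |1/(z + conj λ)|^q dμ(z))^{1/q} ≤ M (Re λ)^{-1/p'}. Then μ is geometric α-Carleson: there exists C > 0 such that μ(T_{ω,r}) ≤ C r^{1/α} for all ω ∈ ℝ and r > 0, where T_{ω,r} is the tent over the interval (ω−r, ω+r). -/
open MeasureTheory Real Complex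

/-- The tent over the boundary interval `(ω-r, ω+r)` in the right half-plane. -/
def tent (ω r : ℝ) : Set ℂ := {z : ℂ | 0 < z.re ∧ |z.im - ω| < r - z.re}

/-- If a nonnegative Borel measure `μ` on the right half-plane satisfies the
reproducing kernel estimate `‖k_λ‖_{L^q(μ)} ≤ M (Re λ)^{-1/p'}` for all
`λ ∈ ℂ_+`, then `μ` is geometric `α`-Carleson with `α = p/q`:
`μ(T_{ω,r}) ≤ C r^{1/α}` for all tents. -/
theorem stmt1 (p q p' α : ℝ) (hp : 1 < p) (hq : 1 < q)
    (hp' : 1 / p + 1 / p' = 1) (hα : α = p / q)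
    (μ : Measure ℂ) (M : ℝ) (hM : 0 < M)
    (hker : ∀ lam : ℂ, 0 < lam.re →
      (∫⁻ z, ENNReal.ofReal (‖1 / (z + (starRingEnd ℂ) lam)‖ ^ q) ∂μ)
          ^ (1 / q) ≤ ENNReal.ofReal (M * lam.re ^ (-(1 / p')))) :
    ∃ C > 0, ∀ (ω r : ℝ), 0 < r →
      μ (tent ω r) ≤ ENNReal.ofReal (C * r ^ (1 / α)) := by
  have hp0 : (0:ℝ) < p := lt_trans one_pos hp
  have hq0 : (0:ℝ) < q := lt_trans one_pos hq
  refine ⟨2 ^ q * M ^ q, by positivity, fun ω r hr => ?_⟩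
  set lam : ℂ := ⟨r, ω⟩ with hlam
  have hlamre : lam.re = r := rfl
  have hkey := hker lam (hlamre ▸ hr)
  rw [hlamre] at hkey
  -- raise the kernel estimate to the power q
  have h1 : (∫⁻ z, ENNReal.ofReal (‖1 / (z + (starRingEnd ℂ) lam)‖ ^ q) ∂μ)
      ≤ ENNReal.ofReal ((M * r ^ (-(1 / p'))) ^ q) := by
    have h := ENNReal.rpow_le_rpow hkey hq0.le
    rw [← ENNReal.rpow_mul, one_div, inv_mul_cancel₀ hq0.ne', ENNReal.rpow_one] at h
    refine h.trans_eq ?_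
    rw [← ENNReal.ofReal_rpow_of_nonneg (by positivity) hq0.le]
  -- measurability of the tent
  have hmeas : MeasurableSet (tent ω r) := by
    unfold tent
    rw [Set.setOf_and]
    exact (measurableSet_lt measurable_const Complex.measurable_re).inter
      (measurableSet_lt ((Complex.measurable_im.sub measurable_const).abs)
        (measurable_const.sub Complex.measurable_re))
  have hr2 : (0:ℝ) < 2 * r := by linarith
  -- pointwise lower bound on the tent
  have hbound : ∀ z ∈ tent ω r,
      ENNReal.ofReal ((1 / (2 * r)) ^ q)
        ≤ ENNReal.ofReal (‖1 / (z + (starRingEnd ℂ) lam)‖ ^ q) := by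
    intro z hz
    obtain ⟨hz1, hz2⟩ := hz
    have him := abs_lt.mp hz2
    set w : ℂ := z + (starRingEnd ℂ) lam with hw
    have hwre : w.re = z.re + r := by simp [hw, hlam, Complex.add_re]
    have hwim : w.im = z.im - ω := by simp [hw, hlam, Complex.add_im, sub_eq_add_neg]
    have hwre0 : 0 < w.re := by rw [hwre]; linarith
    have hwne : w ≠ 0 := fun h => by simp [h] at hwre0
    have habs : ‖w‖ ≤ 2 * r := by
      rw [Complex.norm_def, Complex.normSq_apply, hwre, hwim]
      have : (z.re + r) * (z.re + r) + (z.im - ω) * (z.im - ω) ≤ (2*r)^2 := by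
        nlinarith [him.1, him.2, hz1, sq_nonneg (z.im - ω)]
      calc Real.sqrt ((z.re + r) * (z.re + r) + (z.im - ω) * (z.im - ω))
          ≤ Real.sqrt ((2*r)^2) := Real.sqrt_le_sqrt this
        _ = 2 * r := Real.sqrt_sq hr2.le
    have habs0 : 0 < ‖w‖ := norm_pos_iff.mpr hwne
    apply ENNReal.ofReal_le_ofReal
    apply Real.rpow_le_rpow (by positivity) _ hq0.le
    rw [norm_div, norm_one]
    apply div_le_div_of_nonneg_left one_pos.le habs0 habs
  -- constant times measure bound
  have h2 : ENNReal.ofReal ((1 / (2 * r)) ^ q) * μ (tent ω r)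
      ≤ ∫⁻ z, ENNReal.ofReal (‖1 / (z + (starRingEnd ℂ) lam)‖ ^ q) ∂μ := by
    rw [← lintegral_indicator_const hmeas]
    refine lintegral_mono fun z => ?_
    by_cases hz : z ∈ tent ω r
    · rw [Set.indicator_of_mem hz]; exact hbound z hz
    · rw [Set.indicator_of_notMem hz]; exact zero_le
  have hc0 : (0:ℝ) < (1 / (2 * r)) ^ q := Real.rpow_pos_of_pos (by positivity) q
  -- cancel the constant
  have hα' : 1 / α = q / p := by rw [hα]; field_simp
  have hexp : q / p - q = -(1 / p') * q := by
    have h : 1 / p' = 1 - 1 / p := by linarith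
    rw [h]; field_simp; ring
  have hceq : (1 / (2 * r)) ^ q * (2 ^ q * M ^ q * r ^ (1 / α))
      = (M * r ^ (-(1 / p'))) ^ q := by
    have h2q : (0:ℝ) < (2:ℝ) ^ q := Real.rpow_pos_of_pos two_pos q
    have hrq : (0:ℝ) < r ^ q := Real.rpow_pos_of_pos hr q
    rw [Real.mul_rpow hM.le (Real.rpow_nonneg hr.le _), ← Real.rpow_mul hr.le,
      ← hexp, hα', Real.rpow_sub hr, one_div ((2:ℝ)*r), Real.inv_rpow hr2.le,
      Real.mul_rpow (by norm_num : (0:ℝ) ≤ 2) hr.le]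
    field_simp
  have hfinal : ENNReal.ofReal ((1 / (2 * r)) ^ q) * μ (tent ω r)
      ≤ ENNReal.ofReal ((1 / (2 * r)) ^ q) *
        ENNReal.ofReal (2 ^ q * M ^ q * r ^ (1 / α)) := by
    rw [← ENNReal.ofReal_mul hc0.le, hceq]
    exact h2.trans h1
  exact (ENNReal.mul_le_mul_iff_right (ENNReal.ofReal_pos.mpr hc0).ne' ENNReal.ofReal_ne_top).mp hfinal
end

section
/- Let ε ∈ [0,1) and γ ≥ 1, set α = γ/(1−ε) > 1, and let μ = Σ_{n ∈ ℤ, n≠0} |n|^{-ε} δ_{λ_n} where λ_n = 1 + i·sgn(n)|n|^γ (a discrete measure on ℂ_+). Then μ is geometric α-Carleson: there is a constant C with μ(T_{ω,r}) ≤ C r^{1/α} for all tents T_{ω,r}, using the estimate μ(T_{ω,r}) ≤ μ(T_{0,2r}) ≤ 2 Σ_{j=0}^{⌊(2r−1)^{1/γ}⌋} j^{-ε} ≤ (2/(1−ε))(2r)^{(1−ε)/γ} for r ≥ 1, and μ(T_{ω,r}) = 0 for r < 1. -/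
open MeasureTheory Real

private lemma aux_sub {β : ℝ} (hβ0 : 0 ≤ β) (hβ1 : β ≤ 1) {a b : ℝ} (ha : 0 ≤ a) (hab : a ≤ b) :
    b ^ β - a ^ β ≤ (b - a) ^ β := by
  have h := NNReal.rpow_add_le_add_rpow a.toNNReal (b - a).toNNReal hβ0 hβ1
  have hba : (0:ℝ) ≤ b - a := by linarith
  have hcoe : ((a.toNNReal + (b - a).toNNReal : NNReal) : ℝ) = b := by
    push_cast [Real.coe_toNNReal _ ha, Real.coe_toNNReal _ hba]; ring
  have h' : b ^ β ≤ a ^ β + (b - a) ^ β := by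
    calc b ^ β = (((a.toNNReal + (b - a).toNNReal : NNReal) : ℝ)) ^ β := by rw [hcoe]
    _ = (((a.toNNReal + (b - a).toNNReal) ^ β : NNReal) : ℝ) := by
        rw [← NNReal.coe_rpow]
    _ ≤ (((a.toNNReal ^ β + (b - a).toNNReal ^ β : NNReal)) : ℝ) := by exact_mod_cast h
    _ = a ^ β + (b - a) ^ β := by
        rw [NNReal.coe_add, NNReal.coe_rpow, NNReal.coe_rpow,
          Real.coe_toNNReal _ ha, Real.coe_toNNReal _ hba]
  linarith

private lemma aux_step {ε : ℝ} (hε0 : 0 ≤ ε) (hε1 : ε < 1) {x : ℝ} (hx : 1 ≤ x) :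
    (1 - ε) * x ^ (-ε) ≤ x ^ (1 - ε) - (x - 1) ^ (1 - ε) := by
  have hx0 : (0:ℝ) < x := by linarith
  have hx1 : (0:ℝ) ≤ x - 1 := by linarith
  have hAM : x ^ ε * (x - 1) ^ (1 - ε) ≤ ε * x + (1 - ε) * (x - 1) :=
    Real.geom_mean_le_arith_mean2_weighted hε0 (by linarith) hx0.le hx1 (by ring)
  have h1 : x ^ (1 - ε) = x * x ^ (-ε) := by
    rw [show (1 - ε) = 1 + (-ε) by ring, Real.rpow_add hx0, Real.rpow_one]
  have hmm : x ^ ε * x ^ (-ε) = 1 := by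
    rw [← Real.rpow_add hx0]; simp
  have h2 : (x - 1) ^ (1 - ε) = (x ^ ε * (x - 1) ^ (1 - ε)) * x ^ (-ε) := by
    linear_combination (-((x - 1) ^ (1 - ε))) * hmm
  rw [h1, h2]
  have hxε : (0:ℝ) < x ^ (-ε) := Real.rpow_pos_of_pos hx0 _
  nlinarith [hAM, hxε]

private lemma lemS {ε γ : ℝ} (hε0 : 0 ≤ ε) (hε1 : ε < 1) (hγ : 1 ≤ γ)
    (ω r : ℝ) (hr : 1 ≤ r) (t : Finset ℕ) :
    ∑ j ∈ t, (if 1 ≤ j ∧ |(j:ℝ) ^ γ - ω| < r - 1 then (j:ℝ) ^ (-ε) else 0)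
      ≤ (1 + 2 / (1 - ε)) * r ^ ((1 - ε) / γ) := by
  have hγ0 : (0:ℝ) < γ := by linarith
  have h1ε : (0:ℝ) < 1 - ε := by linarith
  set β : ℝ := (1 - ε) / γ with hβ
  have hβ0 : 0 < β := div_pos h1ε hγ0
  have hβ1 : β ≤ 1 := (div_le_one hγ0).mpr (by linarith)
  have hK : (0:ℝ) < 1 + 2 / (1 - ε) := by positivity
  have hrβ : 1 ≤ r ^ β := Real.one_le_rpow hr hβ0.le
  rw [← Finset.sum_filter]
  set T := t.filter (fun j : ℕ => 1 ≤ j ∧ |(j:ℝ) ^ γ - ω| < r - 1) with hT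
  rcases T.eq_empty_or_nonempty with hTe | hTn
  · rw [hTe]; simp; positivity
  · set m := T.min' hTn with hm
    set M := T.max' hTn with hM
    have hmT : m ∈ T := T.min'_mem hTn
    have hMT : M ∈ T := T.max'_mem hTn
    obtain ⟨-, hm1, hmω⟩ := Finset.mem_filter.mp hmT
    obtain ⟨-, hM1, hMω⟩ := Finset.mem_filter.mp hMT
    have hmM : m ≤ M := T.min'_le _ hMT
    have hmMr : (m:ℝ) ≤ (M:ℝ) := by exact_mod_cast hmM
    have key1 : (M:ℝ) ^ γ - (m:ℝ) ^ γ ≤ 2 * (r - 1) := by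
      have a1 := abs_lt.mp hmω
      have a2 := abs_lt.mp hMω
      linarith [a1.1, a2.2]
    have key0 : (m:ℝ) ^ γ ≤ (M:ℝ) ^ γ :=
      Real.rpow_le_rpow (Nat.cast_nonneg m) hmMr hγ0.le
    -- the per-term bound function
    set F : ℕ → ℝ := fun k => (k:ℝ) ^ (1 - ε) with hF
    have hFmono : ∀ i j : ℕ, i ≤ j → F i ≤ F j := fun i j hij =>
      Real.rpow_le_rpow (Nat.cast_nonneg i) (by exact_mod_cast hij) h1ε.le
    have hstep : ∀ j ∈ T.erase m, (j:ℝ) ^ (-ε) ≤ (F j - F (j - 1)) / (1 - ε) := by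
      intro j hj
      have hjT := Finset.mem_of_mem_erase hj
      obtain ⟨-, hj1, -⟩ := Finset.mem_filter.mp hjT
      have hcast : ((j - 1 : ℕ) : ℝ) = (j:ℝ) - 1 := by
        rw [Nat.cast_sub hj1]; norm_num
      have hx : (1:ℝ) ≤ (j:ℝ) := by exact_mod_cast hj1
      have := aux_step hε0 hε1 hx
      rw [le_div_iff₀ h1ε]
      simp only [hF, hcast]
      linarith
    have htel : ∑ j ∈ Finset.Icc (m + 1) M, (F j - F (j - 1)) = F M - F m := by
      rw [← Finset.Ico_add_one_right_eq_Icc, Finset.sum_Ico_eq_sum_range]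
      have hMm : M + 1 - (m + 1) = M - m := by omega
      rw [hMm]
      have hterm : ∀ i, F (m + 1 + i) - F (m + 1 + i - 1)
          = F (m + (i + 1)) - F (m + i) := by
        intro i
        have e1 : m + 1 + i = m + (i + 1) := by omega
        have e2 : m + 1 + i - 1 = m + i := by omega
        rw [e2, e1]
      calc ∑ i ∈ Finset.range (M - m), (F (m + 1 + i) - F (m + 1 + i - 1))
          = ∑ i ∈ Finset.range (M - m), ((fun k => F (m + k)) (i + 1) - (fun k => F (m + k)) i) := by
            exact Finset.sum_congr rfl fun i _ => hterm i
        _ = F (m + (M - m)) - F (m + 0) := Finset.sum_range_sub (fun k => F (m + k)) (M - m)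
        _ = F M - F m := by rw [Nat.add_sub_cancel' hmM, Nat.add_zero]
    have hsub : T.erase m ⊆ Finset.Icc (m + 1) M := by
      intro j hj
      have hjT := Finset.mem_of_mem_erase hj
      have hjne := Finset.ne_of_mem_erase hj
      have h1 : m ≤ j := T.min'_le _ hjT
      have h2 : j ≤ M := T.le_max' _ hjT
      exact Finset.mem_Icc.mpr ⟨by omega, h2⟩
    have hFnn : ∀ j ∈ Finset.Icc (m + 1) M, j ∉ T.erase m → 0 ≤ F j - F (j - 1) := by
      intro j _ _
      have := hFmono (j - 1) j (by omega)
      linarith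
    have hsum2 : ∑ j ∈ T.erase m, (F j - F (j - 1)) ≤ F M - F m := by
      rw [← htel]
      exact Finset.sum_le_sum_of_subset_of_nonneg hsub hFnn
    have hFM : F M - F m ≤ 2 * r ^ β := by
      have hγβ : γ * β = 1 - ε := by
        rw [hβ]; field_simp
      have e1 : F M = ((M:ℝ) ^ γ) ^ β := by
        show (M:ℝ) ^ (1 - ε) = _
        rw [← Real.rpow_mul (Nat.cast_nonneg M), hγβ]
      have e2 : F m = ((m:ℝ) ^ γ) ^ β := by
        show (m:ℝ) ^ (1 - ε) = _
        rw [← Real.rpow_mul (Nat.cast_nonneg m), hγβ]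
      have h3 : ((M:ℝ) ^ γ) ^ β - ((m:ℝ) ^ γ) ^ β ≤ ((M:ℝ) ^ γ - (m:ℝ) ^ γ) ^ β :=
        aux_sub hβ0.le hβ1 (Real.rpow_nonneg (Nat.cast_nonneg m) γ) key0
      have h4 : ((M:ℝ) ^ γ - (m:ℝ) ^ γ) ^ β ≤ (2 * r) ^ β :=
        Real.rpow_le_rpow (by linarith) (by linarith) hβ0.le
      have h5 : (2 * r) ^ β ≤ 2 * r ^ β := by
        rw [Real.mul_rpow (by norm_num) (by linarith)]
        have : (2:ℝ) ^ β ≤ 2 := by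
          calc (2:ℝ) ^ β ≤ (2:ℝ) ^ (1:ℝ) := Real.rpow_le_rpow_of_exponent_le one_le_two hβ1
          _ = 2 := Real.rpow_one 2
        have hrβ0 : (0:ℝ) ≤ r ^ β := Real.rpow_nonneg (by linarith) _
        nlinarith
      rw [e1, e2]; linarith
    have hmterm : (m:ℝ) ^ (-ε) ≤ 1 :=
      Real.rpow_le_one_of_one_le_of_nonpos (by exact_mod_cast hm1) (by linarith)
    have htot : ∑ j ∈ T, (j:ℝ) ^ (-ε) = (m:ℝ) ^ (-ε) + ∑ j ∈ T.erase m, (j:ℝ) ^ (-ε) :=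
      (Finset.add_sum_erase T _ hmT).symm
    have herase : ∑ j ∈ T.erase m, (j:ℝ) ^ (-ε) ≤ (2 * r ^ β) / (1 - ε) := by
      calc ∑ j ∈ T.erase m, (j:ℝ) ^ (-ε) ≤ ∑ j ∈ T.erase m, (F j - F (j - 1)) / (1 - ε) :=
            Finset.sum_le_sum hstep
      _ = (∑ j ∈ T.erase m, (F j - F (j - 1))) / (1 - ε) := by rw [Finset.sum_div]
      _ ≤ (F M - F m) / (1 - ε) := (div_le_div_iff_of_pos_right h1ε).mpr hsum2
      _ ≤ (2 * r ^ β) / (1 - ε) := (div_le_div_iff_of_pos_right h1ε).mpr hFM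
    calc ∑ j ∈ T, (j:ℝ) ^ (-ε) = (m:ℝ) ^ (-ε) + ∑ j ∈ T.erase m, (j:ℝ) ^ (-ε) := htot
    _ ≤ 1 + (2 * r ^ β) / (1 - ε) := by linarith
    _ ≤ r ^ β + (2 / (1 - ε)) * r ^ β := by
        have : (2 * r ^ β) / (1 - ε) = (2 / (1 - ε)) * r ^ β := by ring
        linarith [this]
    _ = (1 + 2 / (1 - ε)) * r ^ β := by ring

/-- The discrete measure `μ = Σ_{n ∈ ℤ*} |n|^{-ε} δ_{λ_n}` with
`λ_n = 1 + i·sgn(n)|n|^γ`, `ε ∈ [0,1)`, `γ ≥ 1`, `α = γ/(1-ε) > 1`, is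
geometric `α`-Carleson: `μ(T_{ω,r}) ≤ C r^{1/α}` for all tents
`T_{ω,r} = {x+iy : 0 < x, |y-ω| < r-x}`, and `μ(T_{ω,r}) = 0` for `r < 1`. -/
theorem stmt6 (ε γ α : ℝ) (hε0 : 0 ≤ ε) (hε1 : ε < 1) (hγ : 1 ≤ γ)
    (hα : α = γ / (1 - ε))
    (lam : ℤ → ℂ)
    (hlam : ∀ n : ℤ, lam n = 1 + Complex.I * (((Int.sign n : ℝ) * (|n| : ℝ) ^ γ : ℝ) : ℂ))
    (μT : ℝ → ℝ → ℝ)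
    (hμT : ∀ ω r, μT ω r = ∑' n : ℤ,
      if n ≠ 0 ∧ 0 < (lam n).re ∧ |(lam n).im - ω| < r - (lam n).re
      then (|n| : ℝ) ^ (-ε) else 0) :
    (∃ C > 0, ∀ (ω r : ℝ), 0 < r → μT ω r ≤ C * r ^ (1 / α)) ∧
      ∀ (ω r : ℝ), 0 < r → r < 1 → μT ω r = 0 := by
  have h1ε : (0:ℝ) < 1 - ε := by linarith
  have hγ0 : (0:ℝ) < γ := by linarith
  have hre : ∀ n : ℤ, (lam n).re = 1 := by intro n; simp [hlam]
  have him : ∀ n : ℤ, (lam n).im = (Int.sign n : ℝ) * (|n| : ℝ) ^ γ := by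
    intro n; simp [hlam]
  have hβα : 1 / α = (1 - ε) / γ := by
    rw [hα, one_div_div]
  -- vanishing for r ≤ 1
  have hzero : ∀ (ω r : ℝ), r ≤ 1 → μT ω r = 0 := by
    intro ω r hr1
    rw [hμT]
    have h0 : ∀ n : ℤ, (if n ≠ 0 ∧ 0 < (lam n).re ∧ |(lam n).im - ω| < r - (lam n).re
        then (|n| : ℝ) ^ (-ε) else 0) = 0 := by
      intro n
      apply if_neg
      rintro ⟨-, -, habs⟩
      rw [hre] at habs
      have := abs_nonneg ((lam n).im - ω)
      linarith
    rw [tsum_congr h0, tsum_zero]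
  constructor
  · refine ⟨2 * (1 + 2 / (1 - ε)), by positivity, fun ω r hr => ?_⟩
    by_cases hr1 : r ≤ 1
    · rw [hzero ω r hr1]
      positivity
    · push_neg at hr1
      rw [hμT, hβα]
      set K : ℝ := 1 + 2 / (1 - ε) with hK
      have hKpos : 0 < K := by positivity
      set β : ℝ := (1 - ε) / γ with hβ
      apply tsum_le_of_sum_le' (by positivity)
      intro s
      -- split into positives and negatives
      set φ : ℤ → ℝ := fun n => if n ≠ 0 ∧ 0 < (lam n).re ∧ |(lam n).im - ω| < r - (lam n).re
        then (|n| : ℝ) ^ (-ε) else 0 with hφ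
      have hφcond : ∀ n : ℤ, φ n ≠ 0 → n ≠ 0 := by
        intro n hn
        by_contra h
        apply hn
        rw [hφ]
        exact if_neg (by tauto)
      -- positive part
      have hpos : ∑ n ∈ s.filter (fun n => 0 < n), φ n ≤ K * r ^ β := by
        set t := s.filter (fun n => 0 < n) with ht
        have heq : ∀ n ∈ t, φ n =
            (fun j : ℕ => if 1 ≤ j ∧ |(j:ℝ) ^ γ - ω| < r - 1 then (j:ℝ) ^ (-ε) else 0) n.natAbs := by
          intro n hn
          obtain ⟨-, hn0⟩ := Finset.mem_filter.mp hn
          have hsign : Int.sign n = 1 := Int.sign_eq_one_iff_pos.mpr hn0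
          have habs : |(n:ℝ)| = (n.natAbs : ℝ) := by
            rw [← Int.cast_abs, Int.abs_eq_natAbs, Int.cast_natCast]
          have hnat1 : 1 ≤ n.natAbs := by omega
          have hcond : (n ≠ 0 ∧ 0 < (lam n).re ∧ |(lam n).im - ω| < r - (lam n).re)
              ↔ (1 ≤ n.natAbs ∧ |(n.natAbs:ℝ) ^ γ - ω| < r - 1) := by
            rw [hre, him, hsign, habs]
            simp only [Int.cast_one, one_mul]
            constructor
            · rintro ⟨-, -, h3⟩; exact ⟨hnat1, h3⟩
            · rintro ⟨-, h3⟩; exact ⟨by omega, one_pos, h3⟩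
          simp only [hφ]
          exact if_congr hcond (by rw [habs]) rfl
        have hinj : ∀ x ∈ t, ∀ y ∈ t, x.natAbs = y.natAbs → x = y := by
          intro x hx y hy hxy
          obtain ⟨-, hx0⟩ := Finset.mem_filter.mp hx
          obtain ⟨-, hy0⟩ := Finset.mem_filter.mp hy
          omega
        have himg := Finset.sum_image (s := t) (g := Int.natAbs)
          (f := fun j : ℕ => if 1 ≤ j ∧ |(j:ℝ) ^ γ - ω| < r - 1 then (j:ℝ) ^ (-ε) else 0) hinj
        rw [Finset.sum_congr rfl heq, ← himg]
        exact lemS hε0 hε1 hγ ω r hr1.le _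
      -- negative part
      have hneg : ∑ n ∈ (s.filter (fun n => ¬ 0 < n)).filter (fun n => n < 0), φ n
          ≤ K * r ^ β := by
        set t := (s.filter (fun n => ¬ 0 < n)).filter (fun n => n < 0) with ht
        have heq : ∀ n ∈ t, φ n =
            (fun j : ℕ => if 1 ≤ j ∧ |(j:ℝ) ^ γ - (-ω)| < r - 1 then (j:ℝ) ^ (-ε) else 0) n.natAbs := by
          intro n hn
          obtain ⟨-, hn0⟩ := Finset.mem_filter.mp hn
          have hsign : Int.sign n = -1 := Int.sign_eq_neg_one_iff_neg.mpr hn0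
          have habs : |(n:ℝ)| = (n.natAbs : ℝ) := by
            rw [← Int.cast_abs, Int.abs_eq_natAbs, Int.cast_natCast]
          have hnat1 : 1 ≤ n.natAbs := by omega
          have hflip : |(-1:ℝ) * (n.natAbs:ℝ) ^ γ - ω| = |(n.natAbs:ℝ) ^ γ - (-ω)| := by
            rw [show (-1:ℝ) * (n.natAbs:ℝ) ^ γ - ω = -((n.natAbs:ℝ) ^ γ - (-ω)) by ring, abs_neg]
          have hcond : (n ≠ 0 ∧ 0 < (lam n).re ∧ |(lam n).im - ω| < r - (lam n).re)
              ↔ (1 ≤ n.natAbs ∧ |(n.natAbs:ℝ) ^ γ - (-ω)| < r - 1) := by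
            rw [hre, him, hsign, habs]
            simp only [Int.cast_neg, Int.cast_one]
            rw [hflip]
            constructor
            · rintro ⟨-, -, h3⟩; exact ⟨hnat1, h3⟩
            · rintro ⟨-, h3⟩; exact ⟨by omega, one_pos, h3⟩
          simp only [hφ]
          exact if_congr hcond (by rw [habs]) rfl
        have hinj : ∀ x ∈ t, ∀ y ∈ t, x.natAbs = y.natAbs → x = y := by
          intro x hx y hy hxy
          obtain ⟨-, hx0⟩ := Finset.mem_filter.mp hx
          obtain ⟨-, hy0⟩ := Finset.mem_filter.mp hy
          omega
        have himg := Finset.sum_image (s := t) (g := Int.natAbs)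
          (f := fun j : ℕ => if 1 ≤ j ∧ |(j:ℝ) ^ γ - (-ω)| < r - 1 then (j:ℝ) ^ (-ε) else 0) hinj
        rw [Finset.sum_congr rfl heq, ← himg]
        exact lemS hε0 hε1 hγ (-ω) r hr1.le _
      calc ∑ n ∈ s, φ n
          = ∑ n ∈ s.filter (fun n => 0 < n), φ n + ∑ n ∈ s.filter (fun n => ¬ 0 < n), φ n :=
            (Finset.sum_filter_add_sum_filter_not s _ φ).symm
        _ = ∑ n ∈ s.filter (fun n => 0 < n), φ n
            + ∑ n ∈ (s.filter (fun n => ¬ 0 < n)).filter (fun n => n < 0), φ n := by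
            congr 1
            refine (Finset.sum_filter_of_ne ?_).symm
            intro x hx hφx
            have := hφcond x hφx
            obtain ⟨-, hx0⟩ := Finset.mem_filter.mp hx
            omega
        _ ≤ K * r ^ β + K * r ^ β := add_le_add hpos hneg
        _ = 2 * K * r ^ β := by ring
  · intro ω r _ hr1
    exact hzero ω r hr1.le
end

section
/- Let ε ∈ (0,1), γ ≥ 1, α = γ/(1−ε), β the conjugate exponent of α (1/α + 1/β = 1), and μ = Σ_{n∈ℤ*} |n|^{-ε} δ_{1 + i n^γ}. Then the Fefferman–Stein maximal function ψ_μ(x) = sup{μ(T(I))/|I| : x ∈ I, I boundary interval} satisfies ψ_μ(x) ≥ c (⌊x^{1/γ}⌋^{1−ε} − 1)/x for x > 1, and consequently ∫_{n^γ}^{(n+1)^γ} ψ_μ(s)^β ds ≥ c'/(n+1) for n ≥ 2; hence ψ_μ ∉ L^β(ℝ) and μ is not embedding α-Carleson. -/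
set_option maxHeartbeats 1000000


open MeasureTheory Real ENNReal

/-- For the discrete measure `μ = Σ_{n∈ℤ*} |n|^{-ε} δ_{1+i·sgn(n)|n|^γ}` with
`ε ∈ (0,1)`, `γ ≥ 1`, `α = γ/(1-ε)` and conjugate exponent `β`, the
Fefferman–Stein maximal function `ψ_μ` satisfies
`ψ_μ(x) ≥ c(⌊x^{1/γ}⌋^{1-ε} - 1)/x` for `x > 1`, consequently
`∫_{n^γ}^{(n+1)^γ} ψ_μ^β ≥ c'/(n+1)` for `n ≥ 2`, and hence `ψ_μ ∉ L^β(ℝ)`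
(so `μ` is not embedding `α`-Carleson, by the Fefferman–Stein criterion). -/
theorem stmt7 (ε γ α β : ℝ) (hε0 : 0 < ε) (hε1 : ε < 1) (hγ : 1 ≤ γ)
    (hα : α = γ / (1 - ε)) (hβ : 1 / α + 1 / β = 1)
    (lam : ℤ → ℂ)
    (hlam : ∀ n : ℤ, lam n = 1 + Complex.I * (((Int.sign n : ℝ) * (|n| : ℝ) ^ γ : ℝ) : ℂ))
    (μT : ℝ → ℝ → ℝ≥0∞)
    (hμT : ∀ ω r, μT ω r = ∑' n : ℤ,
      if n ≠ 0 ∧ 0 < (lam n).re ∧ |(lam n).im - ω| < r - (lam n).re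
      then ENNReal.ofReal ((|n| : ℝ) ^ (-ε)) else 0)
    (ψ : ℝ → ℝ≥0∞)
    (hψ : ∀ x, ψ x = ⨆ (ω : ℝ) (r : ℝ) (_ : 0 < r ∧ |x - ω| < r),
      μT ω r / ENNReal.ofReal (2 * r)) :
    (∃ c > 0, ∀ x : ℝ, 1 < x →
        ENNReal.ofReal (c * (((⌊x ^ (1 / γ)⌋ : ℝ) ^ (1 - ε) - 1) / x)) ≤ ψ x) ∧
      (∃ c' > 0, ∀ n : ℕ, 2 ≤ n →
        ENNReal.ofReal (c' / (n + 1)) ≤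
          ∫⁻ s in Set.Ioo ((n : ℝ) ^ γ) (((n : ℝ) + 1) ^ γ), ψ s ^ β) ∧
      (∫⁻ s : ℝ, ψ s ^ β) = ⊤ := by
  have hγ0 : (0:ℝ) < γ := lt_of_lt_of_le one_pos hγ
  have hγne : γ ≠ 0 := ne_of_gt hγ0
  have h1ε : (0:ℝ) < 1 - ε := by linarith
  have hd0 : (0:ℝ) < γ - 1 + ε := by linarith
  -- derive the key relation γ = (γ - 1 + ε) * β
  have h1α : 1 / α = (1 - ε) / γ := by rw [hα, one_div_div]
  have h1β : 1 / β = (γ - 1 + ε) / γ := by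
    rw [h1α] at hβ
    have h : 1 - (1 - ε) / γ = (γ - 1 + ε) / γ := by field_simp; ring
    linarith
  have hβne : β ≠ 0 := by
    intro h
    have hpos : (0:ℝ) < (γ - 1 + ε) / γ := div_pos hd0 hγ0
    rw [← h1β, h] at hpos
    norm_num at hpos
  have hkey : γ = (γ - 1 + ε) * β := by
    rw [div_eq_div_iff hβne hγne] at h1β
    linarith
  have hβ0 : 0 < β := by nlinarith
  -- re and im of lam
  have hre : ∀ n : ℤ, (lam n).re = 1 := by
    intro n; rw [hlam]; simp
  have him : ∀ n : ℤ, (lam n).im = (Int.sign n : ℝ) * |(n:ℝ)| ^ γ := by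
    intro n; rw [hlam]; simp
  -- Part 1: pointwise lower bound with c = 1/6
  have key : ∀ x : ℝ, 1 < x →
      ENNReal.ofReal ((1/6 : ℝ) * (((⌊x ^ (1 / γ)⌋ : ℝ) ^ (1 - ε) - 1) / x)) ≤ ψ x := by
    intro x hx
    have hx0 : (0:ℝ) < x := lt_trans one_pos hx
    set N : ℤ := ⌊x ^ (1 / γ)⌋ with hNdef
    have hxr1 : (1:ℝ) ≤ x ^ (1 / γ) := Real.one_le_rpow hx.le (by positivity)
    have hN1 : (1:ℤ) ≤ N := by
      rw [hNdef, Int.le_floor]; exact_mod_cast hxr1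
    have hNR1 : (1:ℝ) ≤ (N:ℝ) := by exact_mod_cast hN1
    have hNR0 : (0:ℝ) < (N:ℝ) := lt_of_lt_of_le one_pos hNR1
    have hNx : (N:ℝ) ≤ x ^ (1 / γ) := Int.floor_le _
    -- step A: ψ x ≥ μT 0 (x+2) / ofReal (2*(x+2))
    have hA : μT 0 (x + 2) / ENNReal.ofReal (2 * (x + 2)) ≤ ψ x := by
      rw [hψ]
      refine le_iSup_of_le 0 ?_
      refine le_iSup_of_le (x + 2) ?_
      refine le_iSup_of_le ⟨by linarith, ?_⟩ le_rfl
      rw [sub_zero, abs_of_pos hx0]; linarith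
    -- step B: lower bound the tent mass
    have hB : ENNReal.ofReal ((N:ℝ) ^ (1 - ε)) ≤ μT 0 (x + 2) := by
      rw [hμT]
      have hterm : ∀ n ∈ Finset.Icc (1:ℤ) N,
          ENNReal.ofReal ((N:ℝ) ^ (-ε)) ≤
            (if n ≠ 0 ∧ 0 < (lam n).re ∧ |(lam n).im - 0| < (x+2) - (lam n).re
              then ENNReal.ofReal (|(n:ℝ)| ^ (-ε)) else 0) := by
        intro n hn
        rw [Finset.mem_Icc] at hn
        obtain ⟨hn1, hnN⟩ := hn
        have hn0 : (0:ℝ) < (n:ℝ) := by exact_mod_cast hn1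
        have habs : |(n:ℝ)| = (n:ℝ) := abs_of_pos hn0
        have hsign : ((Int.sign n : ℤ) : ℝ) = 1 := by
          rw [Int.sign_eq_one_iff_pos.mpr (by exact_mod_cast hn1)]; simp
        have hnNR : (n:ℝ) ≤ (N:ℝ) := by exact_mod_cast hnN
        have hcond : n ≠ 0 ∧ 0 < (lam n).re ∧ |(lam n).im - 0| < (x+2) - (lam n).re := by
          refine ⟨by omega, by rw [hre]; norm_num, ?_⟩
          rw [hre, him, hsign, habs, one_mul, sub_zero]
          have hpow0 : (0:ℝ) ≤ (n:ℝ) ^ γ := Real.rpow_nonneg hn0.le _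
          rw [abs_of_nonneg hpow0]
          have h1 : (n:ℝ) ^ γ ≤ ((N:ℝ)) ^ γ := Real.rpow_le_rpow hn0.le hnNR hγ0.le
          have h2 : ((N:ℝ)) ^ γ ≤ (x ^ (1/γ)) ^ γ :=
            Real.rpow_le_rpow hNR0.le hNx hγ0.le
          have h3 : (x ^ (1/γ)) ^ γ = x := by
            rw [← Real.rpow_mul hx0.le, one_div_mul_cancel hγne, Real.rpow_one]
          rw [h3] at h2
          linarith
        rw [if_pos hcond, habs]
        exact ENNReal.ofReal_le_ofReal
          (Real.rpow_le_rpow_of_nonpos hn0 hnNR (by linarith))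
      calc ENNReal.ofReal ((N:ℝ) ^ (1 - ε))
          ≤ ∑ n ∈ Finset.Icc (1:ℤ) N,
              (if n ≠ 0 ∧ 0 < (lam n).re ∧ |(lam n).im - 0| < (x+2) - (lam n).re
                then ENNReal.ofReal (|(n:ℝ)| ^ (-ε)) else 0) := by
            refine le_trans ?_ (Finset.sum_le_sum hterm)
            rw [Finset.sum_const, Int.card_Icc]
            have hNN : N + 1 - 1 = N := by ring
            have hcard : (((N + 1 - 1).toNat : ℕ) : ℝ) = (N:ℝ) := by
              rw [hNN]
              exact_mod_cast Int.toNat_of_nonneg (by omega)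
            have heq : (N + 1 - 1).toNat • ENNReal.ofReal ((N:ℝ) ^ (-ε)) =
                ENNReal.ofReal ((N:ℝ)) * ENNReal.ofReal ((N:ℝ) ^ (-ε)) := by
              rw [nsmul_eq_mul]
              congr 1
              rw [← ENNReal.ofReal_natCast]
              congr 1
            rw [heq, ← ENNReal.ofReal_mul hNR0.le]
            refine ENNReal.ofReal_le_ofReal (le_of_eq ?_)
            rw [show (1 - ε) = 1 + (-ε) by ring, Real.rpow_add hNR0, Real.rpow_one]
        _ ≤ _ := ENNReal.sum_le_tsum _
    -- step C: combine
    refine le_trans ?_ hA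
    have hreal : (1/6 : ℝ) * (((N:ℝ) ^ (1 - ε) - 1) / x) ≤
        (N:ℝ) ^ (1 - ε) / (2 * (x + 2)) := by
      have ht1 : (1:ℝ) ≤ (N:ℝ) ^ (1 - ε) := Real.one_le_rpow hNR1 h1ε.le
      rw [show (1/6 : ℝ) * (((N:ℝ) ^ (1 - ε) - 1) / x) = ((N:ℝ) ^ (1 - ε) - 1) / (6 * x) by
        field_simp]
      rw [div_le_div_iff₀ (by linarith) (by linarith)]
      nlinarith
    refine le_trans (ENNReal.ofReal_le_ofReal hreal) ?_
    rw [ENNReal.ofReal_div_of_pos (by linarith)]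
    exact ENNReal.div_le_div_right hB _
  constructor
  · exact ⟨1/6, by norm_num, key⟩
  -- the constant for part 2
  have h2pow : (0:ℝ) < (2:ℝ) ^ (ε - 1) := Real.rpow_pos_of_pos two_pos _
  have h2e : (0:ℝ) < 1 - 2 ^ (ε - 1) := by
    have h := Real.rpow_lt_rpow_of_exponent_lt (x := 2) one_lt_two
      (show ε - 1 < 0 by linarith)
    rw [Real.rpow_zero] at h
    linarith
  set K0 : ℝ := (1/6) * (1 - 2 ^ (ε - 1)) * 2 ^ (ε - 1) with hK0def
  have hK0 : 0 < K0 := by rw [hK0def]; positivity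
  set c' : ℝ := K0 ^ β with hc'def
  have hc' : 0 < c' := Real.rpow_pos_of_pos hK0 _
  -- Part 2
  have part2 : ∀ n : ℕ, 2 ≤ n →
      ENNReal.ofReal (c' / (n + 1)) ≤
        ∫⁻ s in Set.Ioo ((n : ℝ) ^ γ) (((n : ℝ) + 1) ^ γ), ψ s ^ β := by
    intro n hn
    set m : ℝ := (n : ℝ) with hmdef
    have hm2 : (2:ℝ) ≤ m := by rw [hmdef]; exact_mod_cast hn
    have hm0 : (0:ℝ) < m := by linarith
    have hm1 : (1:ℝ) < m := by linarith
    have hm1' : (0:ℝ) < m + 1 := by linarith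
    set A : ℝ := (1/6) * ((m ^ (1 - ε) - 1) / (m + 1) ^ γ) with hAdef
    have hmε1 : (1:ℝ) < m ^ (1 - ε) := Real.one_lt_rpow hm1 h1ε
    have hpowpos : (0:ℝ) < (m + 1) ^ γ := Real.rpow_pos_of_pos hm1' _
    have hApos : 0 < A := by
      rw [hAdef]
      exact mul_pos (by norm_num) (div_pos (by linarith) hpowpos)
    -- pointwise bound on the interval
    have hmono : ∀ s ∈ Set.Ioo (m ^ γ) ((m + 1) ^ γ), ENNReal.ofReal A ≤ ψ s := by
      intro s hs
      obtain ⟨hs1, hs2⟩ := hs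
      have hmγ : m ≤ m ^ γ := by
        nth_rewrite 1 [← Real.rpow_one m]
        exact Real.rpow_le_rpow_of_exponent_le hm1.le hγ
      have hs1' : (1:ℝ) < s := by linarith
      have hspos : (0:ℝ) < s := by linarith
      refine le_trans ?_ (key s hs1')
      refine ENNReal.ofReal_le_ofReal ?_
      have hfloor : (m:ℝ) ≤ (⌊s ^ (1 / γ)⌋ : ℝ) := by
        have h1 : m ≤ s ^ (1/γ) := by
          have h := Real.rpow_le_rpow (Real.rpow_nonneg hm0.le γ) hs1.le
            (le_of_lt (by positivity : (0:ℝ) < 1/γ))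
          rwa [← Real.rpow_mul hm0.le, mul_one_div, div_self hγne,
            Real.rpow_one] at h
        have h2 : (n : ℤ) ≤ ⌊s ^ (1/γ)⌋ := Int.le_floor.mpr (by rw [hmdef] at h1; exact_mod_cast h1)
        rw [hmdef]
        exact_mod_cast h2
      have hF1 : (1:ℝ) ≤ (⌊s ^ (1 / γ)⌋ : ℝ) := by linarith
      have hFε : m ^ (1 - ε) ≤ (⌊s ^ (1 / γ)⌋ : ℝ) ^ (1 - ε) :=
        Real.rpow_le_rpow hm0.le hfloor h1ε.le
      have hnum : (0:ℝ) ≤ (⌊s ^ (1 / γ)⌋ : ℝ) ^ (1 - ε) - 1 := by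
        have := Real.one_le_rpow hF1 h1ε.le; linarith
      rw [hAdef]
      refine mul_le_mul_of_nonneg_left ?_ (by norm_num)
      exact div_le_div₀ hnum (by linarith) hspos hs2.le
    -- length of the interval
    have hlen : (m + 1) ^ (γ - 1) ≤ (m + 1) ^ γ - m ^ γ := by
      have hq0 : (0:ℝ) < m / (m + 1) := by positivity
      have hq1 : m / (m + 1) ≤ 1 := by
        rw [div_le_one hm1']; linarith
      have h1 : (m / (m + 1)) ^ γ ≤ m / (m + 1) := by
        have h := Real.rpow_le_rpow_of_exponent_ge hq0 hq1 hγ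
        rwa [Real.rpow_one] at h
      have h2 : m ^ γ = (m + 1) ^ γ * (m / (m + 1)) ^ γ := by
        rw [← Real.mul_rpow (by positivity) (by positivity)]
        congr 1
        field_simp
      have h3 : (m + 1) ^ (γ - 1) = (m + 1) ^ γ * (1 - m / (m + 1)) := by
        rw [Real.rpow_sub hm1', Real.rpow_one]
        rw [show (1 : ℝ) - m / (m + 1) = 1 / (m + 1) by field_simp; ring]
        ring
      rw [h3, h2]
      nlinarith [mul_le_mul_of_nonneg_left h1 hpowpos.le]
    -- lower bound A by K0 * (m+1)^(1-ε-γ)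
    have hAlb : K0 * (m + 1) ^ (1 - ε - γ) ≤ A := by
      have hhalf : ∀ y : ℝ, 0 < y → (y / 2) ^ (1 - ε) = 2 ^ (ε - 1) * y ^ (1 - ε) := by
        intro y hy
        rw [Real.div_rpow hy.le (by norm_num), show (ε - 1 : ℝ) = -(1 - ε) by ring,
          Real.rpow_neg (by norm_num : (0:ℝ) ≤ 2)]
        field_simp
      have hge1 : (1:ℝ) ≤ (m / 2) ^ (1 - ε) :=
        Real.one_le_rpow (by linarith) h1ε.le
      rw [hhalf m hm0] at hge1
      have hnum1 : (1 - 2 ^ (ε - 1)) * m ^ (1 - ε) ≤ m ^ (1 - ε) - 1 := by nlinarith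
      have hnum2 : 2 ^ (ε - 1) * (m + 1) ^ (1 - ε) ≤ m ^ (1 - ε) := by
        have h1 : ((m + 1) / 2) ^ (1 - ε) ≤ m ^ (1 - ε) :=
          Real.rpow_le_rpow (by linarith) (by linarith) h1ε.le
        rwa [hhalf (m + 1) hm1'] at h1
      have hstep : (1 - 2 ^ (ε - 1)) * (2 ^ (ε - 1) * (m + 1) ^ (1 - ε)) ≤
          m ^ (1 - ε) - 1 := by nlinarith
      have hkey2 : (1/6 : ℝ) * ((1 - 2 ^ (ε - 1)) * (2 ^ (ε - 1) * (m + 1) ^ (1 - ε))) ≤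
          (1/6 : ℝ) * (m ^ (1 - ε) - 1) := by linarith
      calc K0 * (m + 1) ^ (1 - ε - γ)
          = K0 * ((m + 1) ^ (1 - ε) / (m + 1) ^ γ) := by
            rw [show (1 - ε - γ : ℝ) = (1 - ε) - γ by ring, Real.rpow_sub hm1']
        _ = (1/6 : ℝ) * ((1 - 2 ^ (ε - 1)) * (2 ^ (ε - 1) * (m + 1) ^ (1 - ε))) /
              (m + 1) ^ γ := by rw [hK0def]; ring
        _ ≤ (1/6 : ℝ) * (m ^ (1 - ε) - 1) / (m + 1) ^ γ :=
            (div_le_div_iff_of_pos_right hpowpos).mpr hkey2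
        _ = A := by rw [hAdef]; ring
    -- final real inequality
    have hfinal : c' / (m + 1) ≤ A ^ β * ((m + 1) ^ γ - m ^ γ) := by
      have hK0A : (K0 * (m + 1) ^ (1 - ε - γ)) ^ β ≤ A ^ β :=
        Real.rpow_le_rpow (by positivity) hAlb hβ0.le
      have hsplit : (K0 * (m + 1) ^ (1 - ε - γ)) ^ β =
          K0 ^ β * (m + 1) ^ ((1 - ε - γ) * β) := by
        rw [Real.mul_rpow hK0.le (Real.rpow_nonneg hm1'.le _),
          ← Real.rpow_mul hm1'.le]
      have hexp : (1 - ε - γ) * β + (γ - 1) = -1 := by linear_combination hkey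
      have hmul : K0 ^ β * (m + 1) ^ ((1 - ε - γ) * β) * (m + 1) ^ (γ - 1) =
          c' / (m + 1) := by
        rw [hc'def, mul_assoc, ← Real.rpow_add hm1', hexp, Real.rpow_neg_one]
        exact (div_eq_mul_inv _ _).symm
      calc c' / (m + 1)
          = K0 ^ β * (m + 1) ^ ((1 - ε - γ) * β) * (m + 1) ^ (γ - 1) := hmul.symm
        _ = (K0 * (m + 1) ^ (1 - ε - γ)) ^ β * (m + 1) ^ (γ - 1) := by rw [hsplit]
        _ ≤ A ^ β * (m + 1) ^ (γ - 1) :=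
            mul_le_mul_of_nonneg_right hK0A (Real.rpow_nonneg hm1'.le _)
        _ ≤ A ^ β * ((m + 1) ^ γ - m ^ γ) :=
            mul_le_mul_of_nonneg_left hlen (Real.rpow_nonneg hApos.le _)
    -- assemble in ENNReal
    calc ENNReal.ofReal (c' / (m + 1))
        ≤ ENNReal.ofReal (A ^ β * ((m + 1) ^ γ - m ^ γ)) :=
          ENNReal.ofReal_le_ofReal hfinal
      _ = ENNReal.ofReal (A ^ β) * ENNReal.ofReal ((m + 1) ^ γ - m ^ γ) :=
          ENNReal.ofReal_mul (Real.rpow_nonneg hApos.le _)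
      _ = (ENNReal.ofReal A) ^ β * volume (Set.Ioo (m ^ γ) ((m + 1) ^ γ)) := by
          rw [ENNReal.ofReal_rpow_of_pos hApos, Real.volume_Ioo]
      _ = ∫⁻ _ in Set.Ioo (m ^ γ) ((m + 1) ^ γ), (ENNReal.ofReal A) ^ β := by
          rw [setLIntegral_const]
      _ ≤ ∫⁻ s in Set.Ioo (m ^ γ) ((m + 1) ^ γ), ψ s ^ β := by
          refine setLIntegral_mono' measurableSet_Ioo ?_
          intro s hs
          exact ENNReal.rpow_le_rpow (hmono s hs) hβ0.le
  refine ⟨⟨c', hc', part2⟩, ?_⟩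
  -- Part 3
  set S : ℕ → Set ℝ := fun k =>
    Set.Ioo (((k + 2 : ℕ) : ℝ) ^ γ) ((((k + 2 : ℕ) : ℝ) + 1) ^ γ) with hSdef
  have hSm : ∀ k, MeasurableSet (S k) := fun k => measurableSet_Ioo
  have hSd : Pairwise (Function.onFun Disjoint S) := by
    have hmono' : ∀ i j : ℕ, i < j → Disjoint (S i) (S j) := by
      intro i j hij
      refine Set.disjoint_left.mpr ?_
      intro a ha hb
      have h1 : a < (((i + 2 : ℕ) : ℝ) + 1) ^ γ := ha.2
      have h2 : (((j + 2 : ℕ) : ℝ)) ^ γ < a := hb.1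
      have h3 : (((i + 2 : ℕ) : ℝ) + 1) ≤ ((j + 2 : ℕ) : ℝ) := by
        push_cast
        have : (i:ℝ) + 1 ≤ j := by exact_mod_cast hij
        linarith
      have h4 : (((i + 2 : ℕ) : ℝ) + 1) ^ γ ≤ (((j + 2 : ℕ) : ℝ)) ^ γ :=
        Real.rpow_le_rpow (by positivity) h3 hγ0.le
      linarith
    intro i j hij
    rcases lt_or_gt_of_ne hij with h | h
    · exact hmono' i j h
    · exact (hmono' j i h).symm
  have hsum_top : (∑' k : ℕ, ENNReal.ofReal (c' / (((k + 2 : ℕ) : ℝ) + 1))) = ⊤ := by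
    by_contra htop
    have hsummable : Summable (fun k : ℕ => (c' / (((k + 2 : ℕ) : ℝ) + 1)).toNNReal) := by
      rw [← ENNReal.tsum_coe_ne_top_iff_summable]
      exact htop
    have hsummable' : Summable (fun k : ℕ => c' / ((k : ℝ) + 3)) := by
      refine (NNReal.summable_coe.mpr hsummable).congr fun k => ?_
      rw [Real.coe_toNNReal _ (by positivity)]
      push_cast
      ring
    have hsum1 : Summable (fun k : ℕ => 1 / ((k : ℝ) + 3)) := by
      refine (hsummable'.mul_left c'⁻¹).congr fun k => ?_
      rw [← mul_div_assoc, inv_mul_cancel₀ hc'.ne']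
    have hdiv : Summable (fun k : ℕ => 1 / (k : ℝ)) := by
      rw [← summable_nat_add_iff 3]
      refine hsum1.congr fun k => ?_
      push_cast
      ring
    exact Real.not_summable_one_div_natCast hdiv
  have hle : (∑' k : ℕ, ENNReal.ofReal (c' / (((k + 2 : ℕ) : ℝ) + 1))) ≤
      ∫⁻ s : ℝ, ψ s ^ β := by
    calc (∑' k : ℕ, ENNReal.ofReal (c' / (((k + 2 : ℕ) : ℝ) + 1)))
        ≤ ∑' k : ℕ, ∫⁻ s in S k, ψ s ^ β :=
          ENNReal.tsum_le_tsum fun k => part2 (k + 2) (by omega)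
      _ = ∫⁻ s in ⋃ k, S k, ψ s ^ β := (lintegral_iUnion hSm hSd _).symm
      _ ≤ ∫⁻ s : ℝ, ψ s ^ β := setLIntegral_le_lintegral _ _
  rw [hsum_top] at hle
  exact top_le_iff.mp hle
end

section
/- Let q ∈ (1,∞), p' = αq with α > 0, let (λ_n) ⊆ ℂ_+ and (b_n) ⊆ ℂ, and set μ = Σ_n |b_n|^q δ_{λ_n}. If μ is geometric α-Carleson (μ(T([−R,R])) ≤ C R^{1/α} for all R > 0, where T([−R,R]) is the tent over [−R,R] on the boundary of ℂ_+), then for every θ > 1/p' = 1/(αq), Σ_n |b_n|^q / |1 + λ_n|^{θq} < ∞. -/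
open MeasureTheory Real ENNReal

-- auxiliary: dyadic bracketing of reals ≥ 1
lemma aux_dyadic (x : ℝ) (hx : 1 ≤ x) : ∃ n : ℕ, (2:ℝ)^n ≤ x ∧ x < 2^(n+1) := by
  have h0 : 0 < x := lt_of_lt_of_le one_pos hx
  have hlog : 0 ≤ Int.log 2 x := by
    rw [Int.log_of_one_le_right _ hx]; exact Int.natCast_nonneg _
  refine ⟨(Int.log 2 x).toNat, ?_, ?_⟩
  · have h := Int.zpow_log_le_self (b := 2) (R := ℝ) (by norm_num) h0
    have he : ((2:ℕ):ℝ)^(Int.log 2 x) = (2:ℝ)^((Int.log 2 x).toNat) := by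
      rw [show Int.log 2 x = (((Int.log 2 x).toNat : ℕ) : ℤ) from (Int.toNat_of_nonneg hlog).symm, zpow_natCast]
      norm_cast
    rwa [he] at h
  · have h := Int.lt_zpow_succ_log_self (b := 2) (R := ℝ) (by norm_num) x
    have he : ((2:ℕ):ℝ)^(Int.log 2 x + 1) = (2:ℝ)^((Int.log 2 x).toNat + 1) := by
      rw [show Int.log 2 x + 1 = (((Int.log 2 x).toNat + 1 : ℕ) : ℤ) by push_cast [Int.toNat_of_nonneg hlog]; ring, zpow_natCast]
      norm_num
    rwa [he] at h

lemma aux_abs (z : ℂ) (hz : 0 < z.re) :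
    (1 + (z.re + |z.im|)) / 2 ≤ ‖1 + z‖ := by
  have h1 : |(1 + z).re| ≤ ‖1 + z‖ := Complex.abs_re_le_norm _
  have h2 : |(1 + z).im| ≤ ‖1 + z‖ := Complex.abs_im_le_norm _
  simp only [Complex.add_re, Complex.add_im, Complex.one_re, Complex.one_im, zero_add] at h1 h2
  rw [abs_of_pos (by linarith)] at h1
  linarith

/-- If the discrete measure `μ = Σ_n |b_n|^q δ_{λ_n}` on `ℂ_+` is geometric
`α`-Carleson (`μ(T([-R,R])) ≤ C R^{1/α}` for all `R > 0`), with `p' = αq`,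
then `b ∈ X_{-θ}` for every `θ > 1/p'`, i.e.
`Σ_n |b_n|^q / |1+λ_n|^{θq} < ∞`. -/
theorem stmt13 (q α : ℝ) (hq : 1 < q) (hα : 0 < α)
    (lam : ℕ → ℂ) (hre : ∀ n, 0 < (lam n).re) (b : ℕ → ℂ)
    (C : ℝ) (hC : 0 < C)
    (hCarleson : ∀ R : ℝ, 0 < R →
      (∑' n : ℕ, if 0 < (lam n).re ∧ |(lam n).im| ≤ R - (lam n).re
        then ENNReal.ofReal (‖b n‖ ^ q) else 0) ≤
        ENNReal.ofReal (C * R ^ (1 / α))) :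
    ∀ θ : ℝ, 1 / (α * q) < θ →
      (∑' n : ℕ,
        ENNReal.ofReal (‖b n‖ ^ q / ‖1 + lam n‖ ^ (θ * q))) < ⊤ := by
  intro θ hθ
  have hq0 : 0 < q := lt_trans one_pos hq
  set t : ℝ := θ * q with ht_def
  set s : ℝ := 1 / α with hs_def
  have hst : s < t := by
    have := (div_lt_iff₀ (by positivity : (0:ℝ) < α * q)).mp hθ
    -- 1 < θ * (α * q)
    rw [hs_def, ht_def, div_lt_iff₀ hα]
    nlinarith
  have ht0 : 0 < t := by
    have hs0 : 0 < s := by rw [hs_def]; positivity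
    linarith
  set M : ℕ → ℝ := fun k => (lam k).re + |(lam k).im| with hM_def
  have hM0 : ∀ k, 0 < M k := fun k => by
    have := hre k; have := abs_nonneg (lam k).im
    simp only [hM_def]; linarith
  set F : ℕ → ℝ≥0∞ := fun k =>
    ENNReal.ofReal (‖b k‖ ^ q / ‖1 + lam k‖ ^ t) with hF_def
  set G : ℕ → ℕ → ℝ≥0∞ := fun n k =>
    if (2:ℝ)^n ≤ 1 + M k ∧ 1 + M k < 2^(n+1) then F k else 0 with hG_def
  have h1 : (∑' k, F k) ≤ ∑' n, ∑' k, G n k := by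
    rw [ENNReal.tsum_comm]
    refine ENNReal.tsum_le_tsum fun k => ?_
    obtain ⟨n, hn⟩ := aux_dyadic (1 + M k) (by have := hM0 k; linarith)
    calc F k = G n k := by simp [hG_def, hn]
    _ ≤ ∑' n, G n k := ENNReal.le_tsum n
  have h2 : ∀ n : ℕ, (∑' k, G n k) ≤
      ENNReal.ofReal ((2:ℝ)^t * C * 2^s) * (ENNReal.ofReal ((2:ℝ)^(s-t)))^n := by
    intro n
    have hRpos : (0:ℝ) < 2^(n+1) := by positivity
    have step1 : (∑' k, G n k) ≤
        ENNReal.ofReal (((2:ℝ)^n / 2)^(-t)) *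
        (∑' k, if 0 < (lam k).re ∧ |(lam k).im| ≤ (2:ℝ)^(n+1) - (lam k).re
          then ENNReal.ofReal (‖b k‖ ^ q) else 0) := by
      rw [← ENNReal.tsum_mul_left]
      refine ENNReal.tsum_le_tsum fun k => ?_
      simp only [hG_def]
      by_cases h : (2:ℝ)^n ≤ 1 + M k ∧ 1 + M k < 2^(n+1)
      · rw [if_pos h]
        have hcond : 0 < (lam k).re ∧ |(lam k).im| ≤ (2:ℝ)^(n+1) - (lam k).re := by
          refine ⟨hre k, ?_⟩
          have : M k < 2^(n+1) := by have := h.2; linarith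
          simp only [hM_def] at this; linarith
        rw [if_pos hcond, ← ENNReal.ofReal_mul (by positivity)]
        simp only [hF_def]
        refine ENNReal.ofReal_le_ofReal ?_
        have habs : (2:ℝ)^n / 2 ≤ ‖1 + lam k‖ := by
          have ha := aux_abs (lam k) (hre k)
          have h2n : (2:ℝ)^n ≤ 1 + M k := h.1
          simp only [hM_def] at h2n
          linarith
        have hb : (0:ℝ) < (2:ℝ)^n / 2 := by positivity
        have hpow : ((2:ℝ)^n / 2)^t ≤ ‖1 + lam k‖ ^ t :=
          Real.rpow_le_rpow (le_of_lt hb) habs (le_of_lt ht0)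
        have hpow0 : (0:ℝ) < ((2:ℝ)^n / 2)^t := Real.rpow_pos_of_pos hb t
        calc ‖b k‖ ^ q / ‖1 + lam k‖ ^ t
            ≤ ‖b k‖ ^ q / ((2:ℝ)^n / 2)^t := by
              apply div_le_div_of_nonneg_left (by positivity) hpow0 hpow
          _ = ((2:ℝ)^n / 2)^(-t) * ‖b k‖ ^ q := by
              rw [Real.rpow_neg (le_of_lt hb)]; ring
      · rw [if_neg h]; exact zero_le
    refine le_trans step1 ?_
    refine le_trans (mul_le_mul_right (hCarleson _ hRpos) _) ?_
    rw [← ENNReal.ofReal_mul (by positivity), ← ENNReal.ofReal_pow (by positivity),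
      ← ENNReal.ofReal_mul (by positivity)]
    refine ENNReal.ofReal_le_ofReal (le_of_eq ?_)
    -- real identity
    have h2 : (0:ℝ) < 2 := two_pos
    rw [show ((2:ℝ)^n : ℝ) = (2:ℝ)^(n:ℝ) from (Real.rpow_natCast 2 n).symm,
        show ((2:ℝ)^(n+1) : ℝ) = (2:ℝ)^((n:ℝ)+1) by
          rw [← Real.rpow_natCast 2 (n+1)]; push_cast; ring_nf,
        show ((2:ℝ)^((n:ℝ)) / 2 : ℝ) = (2:ℝ)^((n:ℝ)-1) by
          rw [Real.rpow_sub h2, Real.rpow_one],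
        ← Real.rpow_natCast ((2:ℝ)^(s-t)) n,
        ← Real.rpow_mul (le_of_lt h2), ← Real.rpow_mul (le_of_lt h2),
        ← Real.rpow_mul (le_of_lt h2)]
    rw [show (2:ℝ)^(((n:ℝ)-1)*(-t)) * (C * (2:ℝ)^(((n:ℝ)+1)*s)) =
        C * ((2:ℝ)^(((n:ℝ)-1)*(-t)) * (2:ℝ)^(((n:ℝ)+1)*s)) by ring,
      ← Real.rpow_add h2,
      show (2:ℝ)^t * C * (2:ℝ)^s * (2:ℝ)^((s-t)*(n:ℝ)) =
        C * ((2:ℝ)^t * ((2:ℝ)^s * (2:ℝ)^((s-t)*(n:ℝ)))) by ring,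
      ← Real.rpow_add h2, ← Real.rpow_add h2]
    congr 1
    ring
  have h3 : (∑' n : ℕ, ENNReal.ofReal ((2:ℝ)^t * C * 2^s) *
      (ENNReal.ofReal ((2:ℝ)^(s-t)))^n) < ⊤ := by
    rw [ENNReal.tsum_mul_left, ENNReal.tsum_geometric]
    have hr1 : ENNReal.ofReal ((2:ℝ)^(s-t)) < 1 := by
      rw [← ENNReal.ofReal_one]
      exact ENNReal.ofReal_lt_ofReal_iff_of_nonneg (by positivity) |>.mpr
        (Real.rpow_lt_one_of_one_lt_of_neg one_lt_two (by linarith))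
    exact ENNReal.mul_lt_top ENNReal.ofReal_lt_top
      (ENNReal.inv_lt_top.mpr (tsub_pos_of_lt hr1))
  calc (∑' k, F k) ≤ _ := h1
    _ ≤ _ := ENNReal.tsum_le_tsum h2
    _ < ⊤ := h3
end

section
/- Let θ ∈ (0, π/2) and let μ, ν be nonnegative Borel measures on ℂ_+ related as follows: μ is supported in the closed sector S(θ) = {z ≠ 0 : |arg z| ≤ θ}, and ν is the push-forward of μ under z ↦ Re(z) (so ν is supported on (0,∞)). Suppose moreover that on supp μ, Re(z) ≤ |z| ≤ Re(z)/cos(θ). Then for all ω ∈ ℝ and r > 0 we have μ(T_{ω,r}) ≤ ν(T_{0,r}), and, for α ≤ 1, μ is geometric α-Carleson if and only if ν is geometric α-Carleson (with constants depending on θ and α). -/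
open MeasureTheory Real ENNReal

/-- Sectorial measures: let `μ` be a nonnegative Borel measure on `ℂ_+`
supported in the sector `S(θ) = {z ≠ 0 : |arg z| ≤ θ}`, `θ ∈ (0,π/2)`, on which
`Re z ≤ |z| ≤ Re(z)/cos θ`, and let `ν` be the push-forward of `μ` under
`z ↦ Re z`.  Then `μ(T_{ω,r}) ≤ ν((0,r))` for all tents
`T_{ω,r} = {x+iy : 0 < x, |y-ω| < r-x}`, and for `α ≤ 1` the measure `μ` is
geometric `α`-Carleson iff `ν((0,r)) ≤ C r^{1/α}` for all `r > 0`. -/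
theorem stmt15 (θ : ℝ) (hθ0 : 0 < θ) (hθ1 : θ < π / 2)
    (α : ℝ) (hα0 : 0 < α) (hα1 : α ≤ 1)
    (μ : Measure ℂ)
    (hsector : μ {z : ℂ | ¬(z ≠ 0 ∧ |Complex.arg z| ≤ θ)} = 0)
    (hcomp : ∀ᵐ z ∂μ, z.re ≤ ‖z‖ ∧ ‖z‖ ≤ z.re / Real.cos θ)
    (ν : Measure ℝ) (hν : ν = μ.map Complex.re) :
    (∀ (ω r : ℝ), 0 < r →
        μ {z : ℂ | 0 < z.re ∧ |z.im - ω| < r - z.re} ≤ ν (Set.Ioo 0 r)) ∧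
      ((∃ C > 0, ∀ (ω r : ℝ), 0 < r →
          μ {z : ℂ | 0 < z.re ∧ |z.im - ω| < r - z.re} ≤
            ENNReal.ofReal (C * r ^ (1 / α))) ↔
        (∃ C > 0, ∀ r : ℝ, 0 < r →
          ν (Set.Ioo 0 r) ≤ ENNReal.ofReal (C * r ^ (1 / α)))) := by
  have hcos : 0 < Real.cos θ :=
    Real.cos_pos_of_mem_Ioo ⟨by linarith [Real.pi_pos], hθ1⟩
  have hbad : μ {z : ℂ | ¬(z.re ≤ ‖z‖ ∧ ‖z‖ ≤ z.re / Real.cos θ)} = 0 := by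
    simpa [MeasureTheory.ae_iff] using hcomp
  have hmap : ∀ r : ℝ, ν (Set.Ioo 0 r) = μ (Complex.re ⁻¹' Set.Ioo 0 r) := by
    intro r
    rw [hν, Measure.map_apply Complex.measurable_re measurableSet_Ioo]
  have part1 : ∀ (ω r : ℝ), 0 < r →
      μ {z : ℂ | 0 < z.re ∧ |z.im - ω| < r - z.re} ≤ ν (Set.Ioo 0 r) := by
    intro ω r hr
    rw [hmap]
    apply measure_mono
    intro z hz
    obtain ⟨h1, h2⟩ := hz
    have h3 : (0:ℝ) ≤ |z.im - ω| := abs_nonneg _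
    simp only [Set.mem_preimage, Set.mem_Ioo]
    exact ⟨h1, by linarith⟩
  refine ⟨part1, ?_, ?_⟩
  · rintro ⟨C, hC, hcarl⟩
    set K : ℝ := 1 + 1 / Real.cos θ with hK
    have hK1 : (1:ℝ) ≤ K := by
      have : 0 < 1 / Real.cos θ := by positivity
      simp [hK]; linarith
    have hK0 : 0 < K := by linarith
    refine ⟨C * K ^ (1 / α), by positivity, fun r hr => ?_⟩
    have hKr : 0 < K * r := by positivity
    have hsub : Complex.re ⁻¹' Set.Ioo 0 r ⊆
        {z : ℂ | 0 < z.re ∧ |z.im - 0| < K * r - z.re} ∪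
        {z : ℂ | ¬(z.re ≤ ‖z‖ ∧ ‖z‖ ≤ z.re / Real.cos θ)} := by
      intro z hz
      simp only [Set.mem_preimage, Set.mem_Ioo] at hz
      by_cases hcmp : z.re ≤ ‖z‖ ∧ ‖z‖ ≤ z.re / Real.cos θ
      · left
        refine ⟨hz.1, ?_⟩
        have him : |z.im| ≤ ‖z‖ := Complex.abs_im_le_norm z
        have h1 : z.re / Real.cos θ < r / Real.cos θ :=
          (div_lt_div_iff_of_pos_right hcos).mpr hz.2
        have h2 : |z.im| ≤ z.re / Real.cos θ := him.trans hcmp.2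
        have hKr2 : K * r = r + r / Real.cos θ := by
          rw [hK]; field_simp
        rw [sub_zero, hKr2]
        linarith
      · right; exact hcmp
    calc ν (Set.Ioo 0 r) = μ (Complex.re ⁻¹' Set.Ioo 0 r) := hmap r
      _ ≤ μ ({z : ℂ | 0 < z.re ∧ |z.im - 0| < K * r - z.re} ∪
            {z : ℂ | ¬(z.re ≤ ‖z‖ ∧ ‖z‖ ≤ z.re / Real.cos θ)}) :=
          measure_mono hsub
      _ ≤ μ {z : ℂ | 0 < z.re ∧ |z.im - 0| < K * r - z.re} +
            μ {z : ℂ | ¬(z.re ≤ ‖z‖ ∧ ‖z‖ ≤ z.re / Real.cos θ)} :=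
          measure_union_le _ _
      _ = μ {z : ℂ | 0 < z.re ∧ |z.im - 0| < K * r - z.re} := by rw [hbad, add_zero]
      _ ≤ ENNReal.ofReal (C * (K * r) ^ (1 / α)) := hcarl 0 (K * r) hKr
      _ = ENNReal.ofReal (C * K ^ (1 / α) * r ^ (1 / α)) := by
          rw [Real.mul_rpow hK0.le hr.le, mul_assoc]
  · rintro ⟨C, hC, hcarl⟩
    exact ⟨C, hC, fun ω r hr => le_trans (part1 ω r hr) (hcarl r hr)⟩
end

section
/- Let q ∈ (1,∞), p ∈ (1,∞), α = p/q. Let A be an injective diagonal operator on ℓ_q with eigenvalues λ_n ∈ S(θ), θ ∈ (0,π/2), and b = (b_n) a complex sequence. If b is infinite-time L^p-admissible for A (i.e., ‖∫_0^∞ e^{-λ_n t}b_n u(t)dt‖_{ℓ_q} ≤ C‖u‖_{L^p(0,∞)} for all u), then the discrete measure μ = Σ_n |b_n/λ_n|^q δ_{1/λ_n} on ℂ_+ satisfies the reproducing kernel estimate ‖k_z‖_{L^q(μ)} ≤ C cos(θ)^{-2/p} ‖k_z‖_{H^p(ℂ_+)} for all z with Re z > 0, where k_z(λ) = 1/(λ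 + \bar z); consequently μ is geometric α-Carleson. -/
open MeasureTheory Real ENNReal

section AuxStmt17

open Set

lemma aux_cexp_integrableOn {a : ℂ} (ha : 0 < a.re) :
    IntegrableOn (fun t : ℝ => Complex.exp (-a * t)) (Set.Ioi (0:ℝ)) := by
  apply Integrable.mono' (exp_neg_integrableOn_Ioi 0 ha)
  · exact (Complex.continuous_exp.comp
      (continuous_const.mul Complex.continuous_ofReal)).aestronglyMeasurable
  · filter_upwards with t
    rw [Complex.norm_exp]
    simp [Complex.mul_re]

lemma aux_cexp_integral {a : ℂ} (ha : 0 < a.re) :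
    ∫ t in Set.Ioi (0:ℝ), Complex.exp (-a * t) = 1 / a := by
  have ha0 : a ≠ 0 := fun h => by simp [h] at ha
  have hderiv : ∀ x ∈ Set.Ici (0:ℝ),
      HasDerivAt (fun t : ℝ => -Complex.exp (-a * t) / a) (Complex.exp (-a * x)) x := by
    intro x _
    have h1 : HasDerivAt (fun w : ℂ => -Complex.exp (-a * w) / a)
        (Complex.exp (-a * x)) (x : ℂ) := by
      have h0 : HasDerivAt (fun w : ℂ => -a * w) (-a) (x:ℂ) := by
        simpa using (hasDerivAt_id (x:ℂ)).const_mul (-a)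
      have := ((Complex.hasDerivAt_exp (-a * x)).comp (x:ℂ) h0).neg.div_const a
      rwa [show -(Complex.exp (-a * ↑x) * -a) / a = Complex.exp (-a * ↑x) by field_simp] at this
    exact h1.comp_ofReal
  have htend : Filter.Tendsto (fun t : ℝ => -Complex.exp (-a * t) / a)
      Filter.atTop (nhds 0) := by
    rw [tendsto_zero_iff_norm_tendsto_zero]
    have : (fun t : ℝ => ‖-Complex.exp (-a * t) / a‖)
        = fun t : ℝ => Real.exp (-(a.re * t)) / ‖a‖ := by
      funext t
      rw [norm_div, norm_neg, Complex.norm_exp]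
      simp [Complex.mul_re]
    rw [this]
    have h2 : Filter.Tendsto (fun t : ℝ => Real.exp (-(a.re * t))) Filter.atTop (nhds 0) :=
      Real.tendsto_exp_neg_atTop_nhds_zero.comp
        (Filter.Tendsto.const_mul_atTop ha Filter.tendsto_id)
    simpa using h2.div_const (‖a‖)
  have := integral_Ioi_of_hasDerivAt_of_tendsto' hderiv (aux_cexp_integrableOn ha) htend
  rw [this]
  simp [neg_div]

lemma aux_eLpNorm {w : ℂ} (hw : 0 < w.re) {p : ℝ} (hp : 1 < p) :
    eLpNorm (fun t : ℝ => Complex.exp (-w * t)) (ENNReal.ofReal p)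
        (volume.restrict (Set.Ioi (0:ℝ)))
      = ENNReal.ofReal ((1 / (p * w.re)) ^ (1 / p)) := by
  have hp0 : (0:ℝ) < p := by linarith
  have hk : 0 < p * w.re := by positivity
  have hne0 : ENNReal.ofReal p ≠ 0 := by
    simp [ENNReal.ofReal_eq_zero]; linarith
  rw [eLpNorm_eq_lintegral_rpow_enorm_toReal hne0 ENNReal.ofReal_ne_top]
  rw [ENNReal.toReal_ofReal hp0.le]
  have hpt : ∀ t ∈ Set.Ioi (0:ℝ),
      ‖Complex.exp (-w * t)‖ₑ ^ p = ENNReal.ofReal (Real.exp (-(p * w.re * t))) := by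
    intro t _
    rw [← ofReal_norm, Complex.norm_exp]
    rw [ENNReal.ofReal_rpow_of_nonneg (Real.exp_pos _).le hp0.le]
    congr 1
    rw [← Real.exp_mul]
    congr 1
    simp [Complex.mul_re]
    ring
  rw [setLIntegral_congr_fun measurableSet_Ioi hpt]
  have hint : IntegrableOn (fun t : ℝ => Real.exp (-(p * w.re * t))) (Set.Ioi (0:ℝ)) := by
    simpa [mul_assoc] using exp_neg_integrableOn_Ioi 0 hk
  rw [← ofReal_integral_eq_lintegral_ofReal hint
    (Filter.Eventually.of_forall fun t => (Real.exp_pos _).le)]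
  have hval : ∫ t in Set.Ioi (0:ℝ), Real.exp (-(p * w.re * t)) = 1 / (p * w.re) := by
    have := integral_comp_mul_left_Ioi (fun s => Real.exp (-s)) 0 hk
    simp only [mul_zero] at this
    calc ∫ t in Set.Ioi (0:ℝ), Real.exp (-(p * w.re * t))
        = (p * w.re)⁻¹ • ∫ s in Set.Ioi (0:ℝ), Real.exp (-s) := this
      _ = 1 / (p * w.re) := by rw [integral_exp_neg_Ioi_zero]; simp [one_div]
  rw [hval, ENNReal.ofReal_rpow_of_nonneg (by positivity) (by positivity)]

lemma aux_memLp {w : ℂ} (hw : 0 < w.re) {p : ℝ} (hp : 1 < p) :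
    MemLp (fun t : ℝ => Complex.exp (-w * t)) (ENNReal.ofReal p)
      (volume.restrict (Set.Ioi (0:ℝ))) := by
  constructor
  · exact (Complex.continuous_exp.comp
      (continuous_const.mul Complex.continuous_ofReal)).aestronglyMeasurable
  · rw [aux_eLpNorm hw hp]
    exact ENNReal.ofReal_lt_top

lemma aux_geom {θ : ℝ} (hθ0 : 0 < θ) (hθ1 : θ < π / 2) {l : ℂ} (hne : l ≠ 0)
    (harg : |Complex.arg l| ≤ θ) {z : ℂ} (hz : 0 < z.re) :
    Real.cos θ * (1 + ‖l‖ * z.re) ≤ ‖1 + l * (starRingEnd ℂ) z‖ := by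
  set r := ‖l‖ with hrdef
  have hr : 0 < r := norm_pos_iff.mpr hne
  have hc : 0 < Real.cos θ := Real.cos_pos_of_mem_Ioo ⟨by linarith, hθ1⟩
  have hc1 : Real.cos θ ≤ 1 := Real.cos_le_one θ
  have ha : Real.cos θ * r ≤ l.re := by
    have h1 : Real.cos θ ≤ Real.cos |Complex.arg l| :=
      Real.cos_le_cos_of_nonneg_of_le_pi (abs_nonneg _) (by linarith [Real.pi_pos]) harg
    rw [Real.cos_abs] at h1
    rw [Complex.cos_arg hne] at h1
    calc Real.cos θ * r ≤ (l.re / r) * r := mul_le_mul_of_nonneg_right h1 hr.le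
      _ = l.re := by field_simp
  have hsq : (Real.cos θ * (1 + r * z.re))^2 ≤ (‖1 + l * (starRingEnd ℂ) z‖)^2 := by
    rw [Complex.sq_norm, Complex.normSq_apply]
    have hre : (1 + l * (starRingEnd ℂ) z).re = 1 + (l.re * z.re + l.im * z.im) := by
      simp [Complex.mul_re]
    have him : (1 + l * (starRingEnd ℂ) z).im = l.im * z.re - l.re * z.im := by
      simp [Complex.mul_im]; ring
    rw [hre, him]
    have hr2 : l.re^2 + l.im^2 = r^2 := by
      rw [hrdef, Complex.sq_norm, Complex.normSq_apply]; ring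
    set a := l.re; set bb := l.im; set x := z.re; set y := z.im
    have hid : r^2 * ((1 + (a*x + bb*y))^2 + (bb*x - a*y)^2)
        = (r^2*y + bb)^2 + (r^2*x + a)^2 := by
      linear_combination (r^2*(x^2+y^2) - 1) * hr2
    have h1 : Real.cos θ * r * (1 + r * x) ≤ a + r^2 * x := by
      nlinarith [mul_pos hr hz, mul_nonneg (mul_nonneg hc.le hr.le) (mul_nonneg hr.le hz.le)]
    have h2 : (Real.cos θ * r * (1 + r * x))^2 ≤ (a + r^2*x)^2 := by
      have hnn : 0 ≤ Real.cos θ * r * (1 + r * x) := by positivity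
      exact pow_le_pow_left₀ hnn h1 2
    nlinarith [sq_nonneg (r^2*y + bb), sq_nonneg r, hr, mul_pos hr hr]
  have h0 : 0 ≤ Real.cos θ * (1 + r * z.re) := by positivity
  nlinarith [norm_nonneg (1 + l * (starRingEnd ℂ) z)]

lemma aux_J_integrable {p : ℝ} (hp : 1 < p) :
    Integrable (fun t : ℝ => (t ^ 2 + 1) ^ (-(p / 2))) := by
  have h := integrable_rpow_neg_one_add_norm_sq (μ := (volume : Measure ℝ)) (E := ℝ)
    (r := p) (by simpa using hp)
  convert h using 2 with t
  rw [Real.norm_eq_abs, sq_abs]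
  ring_nf

lemma aux_J_lb {p : ℝ} (hp : 1 < p) :
    1 / p ≤ ∫ t : ℝ, (t ^ 2 + 1) ^ (-(p / 2)) := by
  have hp0 : (0:ℝ) < p := by linarith
  set d : ℝ := 1 / p with hd
  have hd0 : 0 < d := by positivity
  have hconst : (1/2 : ℝ) ≤ (d ^ 2 + 1) ^ (-(p / 2)) := by
    have hXle : (d ^ 2 + 1) ^ (p / 2) ≤ 2 := by
      have h1 : d ^ 2 + 1 ≤ Real.exp (d ^ 2) := by
        have := Real.add_one_le_exp (d ^ 2); linarith
      have h2 : (d ^ 2 + 1) ^ (p / 2) ≤ Real.exp (d ^ 2) ^ (p / 2) :=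
        Real.rpow_le_rpow (by positivity) h1 (by positivity)
      have h3 : Real.exp (d ^ 2) ^ (p / 2) = Real.exp (d ^ 2 * (p / 2)) :=
        (Real.exp_mul _ _).symm
      have h4 : d ^ 2 * (p / 2) ≤ 1 / 2 := by
        rw [hd, div_pow, one_pow]
        rw [div_mul_eq_mul_div, one_mul, div_le_div_iff₀ (by positivity) (by norm_num)]
        nlinarith
      have h5 : Real.exp (d ^ 2 * (p / 2)) ≤ Real.exp (1/2) := Real.exp_le_exp.mpr h4
      have h6 : Real.exp (1/2) ≤ 2 := by
        have he : Real.exp (1/2) * Real.exp (1/2) = Real.exp 1 := by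
          rw [← Real.exp_add]; norm_num
        nlinarith [Real.exp_one_lt_d9, Real.exp_pos (1/2 : ℝ)]
      linarith
    have hXpos : 0 < (d ^ 2 + 1) ^ (p / 2) := Real.rpow_pos_of_pos (by positivity) _
    rw [Real.rpow_neg (by positivity)]
    rw [le_inv_comm₀ (by norm_num) hXpos]
    linarith
  have hnn : ∀ t : ℝ, 0 ≤ (t ^ 2 + 1) ^ (-(p / 2)) := fun t =>
    Real.rpow_nonneg (by positivity) _
  have hint := aux_J_integrable hp
  have step1 : ∫ t in Icc (-d) d, (t ^ 2 + 1) ^ (-(p / 2))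
      ≤ ∫ t : ℝ, (t ^ 2 + 1) ^ (-(p / 2)) :=
    setIntegral_le_integral hint (Filter.Eventually.of_forall hnn)
  have step2 : ∫ t in Icc (-d) d, (1/2 : ℝ) ≤ ∫ t in Icc (-d) d, (t ^ 2 + 1) ^ (-(p / 2)) := by
    apply setIntegral_mono_on
    · exact integrableOn_const (by rw [Real.volume_Icc]; exact ofReal_ne_top)
    · exact hint.integrableOn
    · exact measurableSet_Icc
    · intro t ht
      refine le_trans hconst ?_
      apply Real.rpow_le_rpow_of_nonpos (by positivity) ?_ (by linarith)
      have : t ^ 2 ≤ d ^ 2 := sq_le_sq' ht.1 ht.2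
      linarith
  have step3 : ∫ t in Icc (-d) d, (1/2 : ℝ) = d := by
    rw [setIntegral_const, Real.volume_real_Icc, smul_eq_mul,
      max_eq_left (by linarith)]
    ring
  rw [step3] at step2
  calc 1 / p = d := rfl
    _ ≤ _ := le_trans step2 step1

lemma aux_final {p p' C c J x κ W : ℝ} (hp : 1 < p) (hp'e : -(1/p') = 1/p - 1)
    (hC : 0 < C) (hc : 0 < c) (hx : 0 < x) (hJpos : 0 < J) (hκ : 0 < κ) (hW : 0 < W)
    (hinner : κ ^ (p:ℝ) * W ≤ c ^ (-2:ℝ) * (J * x ^ (1-p:ℝ))) :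
    κ * (C * W ^ (1/p)) ≤ C * c ^ (-(2/p)) * (J ^ (1/p) * x ^ (-(1/p'))) := by
  have hp0 : (0:ℝ) < p := by linarith
  have h1 : (κ ^ (p:ℝ)) ^ (1/p) = κ := by
    rw [← Real.rpow_mul hκ.le, mul_one_div_cancel hp0.ne', Real.rpow_one]
  calc κ * (C * W ^ (1/p)) = C * ((κ ^ (p:ℝ)) ^ (1/p) * W ^ (1/p)) := by rw [h1]; ring
    _ = C * (κ ^ (p:ℝ) * W) ^ (1/p) := by
        rw [← Real.mul_rpow (Real.rpow_nonneg hκ.le p) hW.le]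
    _ ≤ C * (c ^ (-2:ℝ) * (J * x ^ (1-p:ℝ))) ^ (1/p) :=
        mul_le_mul_of_nonneg_left
          (Real.rpow_le_rpow (by positivity) hinner (by positivity)) hC.le
    _ = C * c ^ (-(2/p)) * (J ^ (1/p) * x ^ (-(1/p'))) := by
        rw [Real.mul_rpow (by positivity) (by positivity),
          Real.mul_rpow hJpos.le (by positivity),
          ← Real.rpow_mul hc.le, ← Real.rpow_mul hx.le,
          show (-2:ℝ)*(1/p) = -(2/p) by ring,
          show (1-p)*(1/p) = -(1/p') by rw [hp'e]; field_simp]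
        ring

end AuxStmt17

/-- Let `A` be the injective diagonal operator on `ℓ_q` with eigenvalues
`λ_n ∈ S(θ)` and `b = (b_n)` a complex sequence.  If `b` is infinite-time
`L^p`-admissible for `A`, then the measure `μ = Σ_n |b_n/λ_n|^q δ_{1/λ_n}`
satisfies the reproducing kernel estimate
`‖k_z‖_{L^q(μ)} ≤ C cos(θ)^{-2/p} ‖k_z‖_{H^p}` for `Re z > 0`
(with `‖k_z‖_{H^p} = C_p (Re z)^{-1/p'}`), and consequently `μ` is geometric
`α`-Carleson with `α = p/q`. -/
theorem stmt17 (p q p' α θ : ℝ) (hp : 1 < p) (hq : 1 < q)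
    (hp' : 1 / p + 1 / p' = 1) (hα : α = p / q) (hθ0 : 0 < θ) (hθ1 : θ < π / 2)
    (lam : ℕ → ℂ) (hlam : ∀ n, lam n ≠ 0 ∧ |Complex.arg (lam n)| ≤ θ)
    (b : ℕ → ℂ) (C : ℝ) (hC : 0 < C)
    (hadm : ∀ u : ℝ → ℂ,
      MemLp u (ENNReal.ofReal p) (volume.restrict (Set.Ioi (0:ℝ))) →
      (∑' n : ℕ, ENNReal.ofReal (‖b n‖ ^ q *
          ‖∫ t in Set.Ioi (0:ℝ),
            Complex.exp (-(lam n) * t) * u t‖ ^ q)) ^ (1 / q) ≤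
        ENNReal.ofReal C *
          eLpNorm u (ENNReal.ofReal p) (volume.restrict (Set.Ioi (0:ℝ)))) :
    (∀ z : ℂ, 0 < z.re →
        (∑' n : ℕ, ENNReal.ofReal (‖b n / lam n‖ ^ q *
            ‖1 / ((lam n)⁻¹ + (starRingEnd ℂ) z)‖ ^ q)) ^ (1 / q) ≤
          ENNReal.ofReal (C * Real.cos θ ^ (-(2 / p)) *
            ((∫ t : ℝ, ((t : ℝ) ^ 2 + 1) ^ (-(p / 2))) ^ (1 / p) *
              z.re ^ (-(1 / p'))))) ∧
      ∃ C' > 0, ∀ (ω r : ℝ), 0 < r →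
        (∑' n : ℕ,
            if 0 < ((lam n)⁻¹).re ∧ |((lam n)⁻¹).im - ω| < r - ((lam n)⁻¹).re
            then ENNReal.ofReal (‖b n / lam n‖ ^ q) else 0) ≤
          ENNReal.ofReal (C' * r ^ (1 / α)) := by
  have hp0 : (0:ℝ) < p := by linarith
  have hq0 : (0:ℝ) < q := by linarith
  have hc : 0 < Real.cos θ := Real.cos_pos_of_mem_Ioo ⟨by linarith, hθ1⟩
  have hc1 : Real.cos θ ≤ 1 := Real.cos_le_one θ
  have hre : ∀ n, 0 < (lam n).re := by
    intro n
    rcases Complex.abs_arg_lt_pi_div_two_iff.mp (lt_of_le_of_lt (hlam n).2 hθ1) with h | h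
    · exact h
    · exact absurd h (hlam n).1
  set J : ℝ := ∫ t : ℝ, ((t : ℝ) ^ 2 + 1) ^ (-(p / 2)) with hJdef
  have hJ : 1 / p ≤ J := aux_J_lb hp
  have hJpos : 0 < J := lt_of_lt_of_le (by positivity) hJ
  -- master admissibility consequence
  have key : ∀ w : ℂ, 0 < w.re →
      (∑' n : ℕ, ENNReal.ofReal (‖b n‖ ^ q *
          ‖1 / (lam n + w)‖ ^ q)) ^ (1 / q) ≤
        ENNReal.ofReal (C * (1 / (p * w.re)) ^ (1 / p)) := by
    intro w hw
    have h := hadm (fun t => Complex.exp (-w * t)) (aux_memLp hw hp)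
    have hrw : ∀ n : ℕ, (∫ t in Set.Ioi (0:ℝ),
        Complex.exp (-(lam n) * t) * Complex.exp (-w * t)) = 1 / (lam n + w) := by
      intro n
      have hfe : (fun t : ℝ => Complex.exp (-(lam n) * t) * Complex.exp (-w * t))
          = fun t : ℝ => Complex.exp (-(lam n + w) * t) := by
        funext t
        rw [← Complex.exp_add]
        congr 1
        ring
      rw [hfe, aux_cexp_integral (by simpa using add_pos (hre n) hw)]
    simp only [hrw] at h
    refine le_trans h ?_
    rw [aux_eLpNorm hw hp, ← ENNReal.ofReal_mul hC.le]
  -- Part 1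
  have part1 : ∀ z : ℂ, 0 < z.re →
      (∑' n : ℕ, ENNReal.ofReal (‖b n / lam n‖ ^ q *
          ‖1 / ((lam n)⁻¹ + (starRingEnd ℂ) z)‖ ^ q)) ^ (1 / q) ≤
        ENNReal.ofReal (C * Real.cos θ ^ (-(2 / p)) *
          (J ^ (1 / p) * z.re ^ (-(1 / p')))) := by
    intro z hz
    set x := z.re with hxdef
    -- choose w and κ according to the case
    have hp'e : -(1/p') = 1/p - 1 := by
      have hpne : p ≠ 0 := hp0.ne'
      have : 1/p' = 1 - 1/p := by linarith
      rw [this]; ring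
    have hz' : 0 < z.re := hz
    have hzne : z ≠ 0 := fun h => by rw [h] at hz'; simp at hz'
    obtain ⟨w, hw, κ, hκ, hbound, hfinal⟩ :
        ∃ w : ℂ, 0 < w.re ∧ ∃ κ : ℝ, 0 < κ ∧
          (∀ n, ‖1 / (1 + lam n * (starRingEnd ℂ) z)‖
              ≤ κ * ‖1 / (lam n + w)‖) ∧
          κ * (C * (1 / (p * w.re)) ^ (1 / p)) ≤
            C * Real.cos θ ^ (-(2 / p)) * (J ^ (1 / p) * x ^ (-(1 / p'))) := by
      rcases le_total p 2 with hp2 | hp2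
      · -- case p ≤ 2 : w = 1/x (real), κ = 1/(cos θ * x)
        refine ⟨((x⁻¹ : ℝ) : ℂ), by simpa using inv_pos.mpr hz,
          1 / (Real.cos θ * x), by positivity, ?_, ?_⟩
        · intro n
          set r : ℝ := ‖lam n‖ with hr
          have hrpos : 0 < r := norm_pos_iff.mpr (hlam n).1
          have hgeom := aux_geom hθ0 hθ1 (hlam n).1 (hlam n).2 hz
          have hpos1 : 0 < Real.cos θ * (1 + r * x) := by positivity
          have hwre : 0 < (lam n + ((x⁻¹ : ℝ) : ℂ)).re := by
            simpa using add_pos (hre n) (inv_pos.mpr hz)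
          have hpos2 : 0 < ‖lam n + ((x⁻¹ : ℝ) : ℂ)‖ :=
            norm_pos_iff.mpr (fun h => by rw [h] at hwre; simp at hwre)
          have habs2 : ‖lam n + ((x⁻¹ : ℝ) : ℂ)‖ ≤ (1 + r * x) / x := by
            calc ‖lam n + ((x⁻¹ : ℝ) : ℂ)‖
                ≤ r + ‖((x⁻¹ : ℝ) : ℂ)‖ := norm_add_le _ _
              _ = r + x⁻¹ := by rw [Complex.norm_real, Real.norm_eq_abs, abs_of_pos (inv_pos.mpr hz)]
              _ = (1 + r * x) / x := by field_simp; ring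
          simp only [norm_div, norm_one]
          calc 1 / ‖1 + lam n * (starRingEnd ℂ) z‖
              ≤ 1 / (Real.cos θ * (1 + r * x)) :=
                one_div_le_one_div_of_le hpos1 hgeom
            _ = 1 / (Real.cos θ * x) * (1 / ((1 + r * x) / x)) := by
                have h1 : Real.cos θ ≠ 0 := hc.ne'
                have h2 : x ≠ 0 := hz.ne'
                have h3 : (1 + r * x) ≠ 0 := by positivity
                field_simp
            _ ≤ 1 / (Real.cos θ * x) * (1 / ‖lam n + ((x⁻¹ : ℝ) : ℂ)‖) := by
                apply mul_le_mul_of_nonneg_left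
                  (one_div_le_one_div_of_le hpos2 habs2) (by positivity)
        · have hwre2 : (((x⁻¹ : ℝ) : ℂ)).re = x⁻¹ := by simp
          rw [hwre2]
          have e1 : 1 / (p * x⁻¹) = x * p⁻¹ := by field_simp
          rw [e1]
          apply aux_final hp hp'e hC hc hz hJpos (by positivity) (by positivity)
          -- inner : (1/(c x))^p * (x p⁻¹) ≤ c^(-2) (J x^(1-p))
          have hccx : (0:ℝ) < Real.cos θ * x := by positivity
          have hxp : (1 / (Real.cos θ * x)) ^ (p:ℝ)
              = Real.cos θ ^ (-p:ℝ) * x ^ (-p:ℝ) := by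
            rw [one_div, Real.inv_rpow hccx.le, Real.mul_rpow hc.le hz.le, mul_inv,
              ← Real.rpow_neg hc.le, ← Real.rpow_neg hz.le]
          rw [hxp]
          have hx1 : x ^ (-p:ℝ) * x = x ^ (1-p:ℝ) := by
            nth_rewrite 2 [← Real.rpow_one x]
            rw [← Real.rpow_add hz]
            congr 1
            ring
          have hA : Real.cos θ ^ (-p:ℝ) * p⁻¹ ≤ Real.cos θ ^ (-2:ℝ) * J := by
            have h1 : Real.cos θ ^ (-p:ℝ)
                = Real.cos θ ^ (-2:ℝ) * Real.cos θ ^ (2-p:ℝ) := by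
              rw [← Real.rpow_add hc]
              congr 1
              ring
            have h2 : Real.cos θ ^ (2-p:ℝ) ≤ 1 :=
              Real.rpow_le_one hc.le hc1 (by linarith)
            calc Real.cos θ ^ (-p:ℝ) * p⁻¹
                = Real.cos θ ^ (-2:ℝ) * (Real.cos θ ^ (2-p:ℝ) * p⁻¹) := by rw [h1]; ring
              _ ≤ Real.cos θ ^ (-2:ℝ) * J := by
                  apply mul_le_mul_of_nonneg_left ?_ (Real.rpow_nonneg hc.le _)
                  calc Real.cos θ ^ (2-p:ℝ) * p⁻¹ ≤ 1 * p⁻¹ :=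
                        mul_le_mul_of_nonneg_right h2 (by positivity)
                    _ = 1/p := by ring
                    _ ≤ J := hJ
          calc Real.cos θ ^ (-p:ℝ) * x ^ (-p:ℝ) * (x * p⁻¹)
              = (Real.cos θ ^ (-p:ℝ) * p⁻¹) * (x ^ (-p:ℝ) * x) := by ring
            _ = (Real.cos θ ^ (-p:ℝ) * p⁻¹) * x ^ (1-p:ℝ) := by rw [hx1]
            _ ≤ (Real.cos θ ^ (-2:ℝ) * J) * x ^ (1-p:ℝ) :=
                mul_le_mul_of_nonneg_right hA (Real.rpow_nonneg hz.le _)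
            _ = Real.cos θ ^ (-2:ℝ) * (J * x ^ (1-p:ℝ)) := by ring
      · -- case 2 ≤ p : w = (conj z)⁻¹, κ = 1/|z|
        have hR : 0 < ‖z‖ := norm_pos_iff.mpr hzne
        have hcz : (starRingEnd ℂ) z ≠ 0 := star_ne_zero.mpr hzne
        have hwre : (((starRingEnd ℂ) z)⁻¹).re = x / (‖z‖)^2 := by
          rw [Complex.inv_re, Complex.conj_re, Complex.normSq_conj, Complex.normSq_eq_norm_sq]
        refine ⟨((starRingEnd ℂ) z)⁻¹, by rw [hwre]; positivity,
          1 / ‖z‖, by positivity, ?_, ?_⟩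
        · intro n
          have hfac : 1 + lam n * (starRingEnd ℂ) z
              = (starRingEnd ℂ) z * (lam n + ((starRingEnd ℂ) z)⁻¹) := by
            rw [mul_add, mul_inv_cancel₀ hcz]
            ring
          rw [hfac]
          simp only [norm_div, norm_one, norm_mul, Complex.norm_conj]
          rw [one_div, one_div, one_div, mul_inv]
        · rw [hwre]
          have e1 : 1 / (p * (x / (‖z‖)^2))
              = (‖z‖)^2 * (x⁻¹ * p⁻¹) := by
            field_simp
          rw [e1]
          apply aux_final hp hp'e hC hc hz hJpos (by positivity) (by positivity)
          have h1 : (1 / ‖z‖) ^ (p:ℝ) = (‖z‖) ^ (-p:ℝ) := by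
            rw [one_div, Real.inv_rpow hR.le, ← Real.rpow_neg hR.le]
          have h2 : (‖z‖) ^ (-p:ℝ) * (‖z‖)^2
              = (‖z‖) ^ (2-p:ℝ) := by
            rw [← Real.rpow_natCast (‖z‖) 2, ← Real.rpow_add hR]
            congr 1
            push_cast
            ring
          have hxle : x ≤ ‖z‖ :=
            le_trans (le_abs_self _) (Complex.abs_re_le_norm z)
          have h3 : (‖z‖) ^ (2-p:ℝ) ≤ x ^ (2-p:ℝ) :=
            Real.rpow_le_rpow_of_nonpos hz hxle (by linarith)
          have h4 : x ^ (2-p:ℝ) * x⁻¹ = x ^ (1-p:ℝ) := by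
            rw [← Real.rpow_neg_one x, ← Real.rpow_add hz]
            congr 1
            ring
          have h5 : (1:ℝ) ≤ Real.cos θ ^ (-2:ℝ) :=
            Real.one_le_rpow_of_pos_of_le_one_of_nonpos hc hc1 (by norm_num)
          calc (1 / ‖z‖) ^ (p:ℝ) * ((‖z‖)^2 * (x⁻¹ * p⁻¹))
              = ((‖z‖) ^ (-p:ℝ) * (‖z‖)^2) * x⁻¹ * p⁻¹ := by
                rw [h1]; ring
            _ = (‖z‖) ^ (2-p:ℝ) * x⁻¹ * p⁻¹ := by rw [h2]
            _ ≤ x ^ (2-p:ℝ) * x⁻¹ * p⁻¹ := by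
                apply mul_le_mul_of_nonneg_right ?_ (by positivity)
                exact mul_le_mul_of_nonneg_right h3 (by positivity)
            _ = x ^ (1-p:ℝ) * p⁻¹ := by rw [h4]
            _ ≤ Real.cos θ ^ (-2:ℝ) * (J * x ^ (1-p:ℝ)) := by
                have hp1 : p⁻¹ ≤ J := by rw [← one_div]; exact hJ
                have hstep : x ^ (1-p:ℝ) * p⁻¹ ≤ J * x ^ (1-p:ℝ) := by
                  rw [mul_comm J]
                  exact mul_le_mul_of_nonneg_left hp1 (Real.rpow_nonneg hz.le _)
                calc x ^ (1-p:ℝ) * p⁻¹ ≤ J * x ^ (1-p:ℝ) := hstep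
                  _ = 1 * (J * x ^ (1-p:ℝ)) := by ring
                  _ ≤ Real.cos θ ^ (-2:ℝ) * (J * x ^ (1-p:ℝ)) := by
                      apply mul_le_mul_of_nonneg_right h5 (by positivity)
    -- summand comparison
    have hpt : ∀ n : ℕ, ENNReal.ofReal (‖b n / lam n‖ ^ q *
        ‖1 / ((lam n)⁻¹ + (starRingEnd ℂ) z)‖ ^ q)
        ≤ ENNReal.ofReal (κ ^ q) * ENNReal.ofReal (‖b n‖ ^ q *
            ‖1 / (lam n + w)‖ ^ q) := by
      intro n
      rw [← ENNReal.ofReal_mul (by positivity)]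
      apply ENNReal.ofReal_le_ofReal
      have habs1 : ‖b n / lam n‖ * ‖1 / ((lam n)⁻¹ + (starRingEnd ℂ) z)‖
          = ‖b n‖ * ‖1 / (1 + lam n * (starRingEnd ℂ) z)‖ := by
        rw [← norm_mul, ← norm_mul]
        congr 1
        have hlne := (hlam n).1
        rw [show (lam n)⁻¹ + (starRingEnd ℂ) z
            = (1 + lam n * (starRingEnd ℂ) z) / lam n from by field_simp]
        rw [one_div_div]
        rw [div_mul_div_comm, mul_comm (b n) (lam n), mul_div_mul_left _ _ hlne, mul_one_div]
      calc ‖b n / lam n‖ ^ q *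
            ‖1 / ((lam n)⁻¹ + (starRingEnd ℂ) z)‖ ^ q
          = (‖b n / lam n‖ *
              ‖1 / ((lam n)⁻¹ + (starRingEnd ℂ) z)‖) ^ q := by
            rw [← Real.mul_rpow (by positivity) (by positivity)]
        _ = (‖b n‖ * ‖1 / (1 + lam n * (starRingEnd ℂ) z)‖) ^ q := by
            rw [habs1]
        _ ≤ (‖b n‖ * (κ * ‖1 / (lam n + w)‖)) ^ q := by
            apply Real.rpow_le_rpow (by positivity) ?_ hq0.le
            exact mul_le_mul_of_nonneg_left (hbound n) (by positivity)
        _ = κ ^ q * (‖b n‖ ^ q * ‖1 / (lam n + w)‖ ^ q) := by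
            rw [show ‖b n‖ * (κ * ‖1 / (lam n + w)‖)
              = κ * (‖b n‖ * ‖1 / (lam n + w)‖) from by ring]
            rw [Real.mul_rpow hκ.le (by positivity),
              Real.mul_rpow (by positivity) (by positivity)]
    calc (∑' n : ℕ, ENNReal.ofReal (‖b n / lam n‖ ^ q *
            ‖1 / ((lam n)⁻¹ + (starRingEnd ℂ) z)‖ ^ q)) ^ (1 / q)
        ≤ (ENNReal.ofReal (κ ^ q) * ∑' n : ℕ, ENNReal.ofReal (‖b n‖ ^ q *
            ‖1 / (lam n + w)‖ ^ q)) ^ (1 / q) := by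
          rw [← ENNReal.tsum_mul_left]
          exact ENNReal.rpow_le_rpow (ENNReal.tsum_le_tsum hpt) (by positivity)
      _ = ENNReal.ofReal κ * (∑' n : ℕ, ENNReal.ofReal (‖b n‖ ^ q *
            ‖1 / (lam n + w)‖ ^ q)) ^ (1 / q) := by
          rw [ENNReal.mul_rpow_of_nonneg _ _ (by positivity)]
          congr 1
          rw [ENNReal.ofReal_rpow_of_nonneg (by positivity) (by positivity)]
          rw [← Real.rpow_mul hκ.le, mul_one_div_cancel hq0.ne', Real.rpow_one]
      _ ≤ ENNReal.ofReal κ * ENNReal.ofReal (C * (1 / (p * w.re)) ^ (1 / p)) := by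
          exact mul_le_mul_right (key w hw) _
      _ ≤ ENNReal.ofReal (C * Real.cos θ ^ (-(2 / p)) * (J ^ (1 / p) * x ^ (-(1 / p')))) := by
          rw [← ENNReal.ofReal_mul hκ.le]
          exact ENNReal.ofReal_le_ofReal hfinal
  refine ⟨part1, ?_⟩
  -- Part 2
  have hp'el : 1 + -(1/p') = 1/p := by
    have h1 : 1/p' = 1 - 1/p := by linarith
    rw [h1]; ring
  set K := C * Real.cos θ ^ (-(2 / p)) * J ^ (1 / p) with hK
  have hKpos : 0 < K := by
    have hc2 := Real.rpow_pos_of_pos hc (-(2/p))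
    have hJ2 := Real.rpow_pos_of_pos hJpos (1/p)
    positivity
  refine ⟨(2 * K) ^ (q:ℝ), by positivity, ?_⟩
  intro ω r hr
  set z : ℂ := ⟨r, ω⟩ with hzdef
  have hzre : z.re = r := rfl
  have h1 := part1 z (by rw [hzre]; exact hr)
  rw [hzre] at h1
  rw [show C * Real.cos θ ^ (-(2/p)) * (J ^ (1/p) * r ^ (-(1/p')))
    = K * r ^ (-(1/p')) from by rw [hK]; ring] at h1
  have hS : (∑' n : ℕ, ENNReal.ofReal (‖b n / lam n‖ ^ q *
      ‖1 / ((lam n)⁻¹ + (starRingEnd ℂ) z)‖ ^ q))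
      ≤ ENNReal.ofReal ((K * r ^ (-(1/p'))) ^ (q:ℝ)) := by
    have h2 := ENNReal.rpow_le_rpow h1 hq0.le
    rw [← ENNReal.rpow_mul, one_div, inv_mul_cancel₀ hq0.ne', ENNReal.rpow_one] at h2
    rw [ENNReal.ofReal_rpow_of_nonneg (by positivity) hq0.le] at h2
    exact h2
  have hpt2 : ∀ n : ℕ, (if 0 < ((lam n)⁻¹).re ∧ |((lam n)⁻¹).im - ω| < r - ((lam n)⁻¹).re
      then ENNReal.ofReal (‖b n / lam n‖ ^ q) else 0)
      ≤ ENNReal.ofReal ((2*r) ^ (q:ℝ)) * ENNReal.ofReal (‖b n / lam n‖ ^ q *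
          ‖1 / ((lam n)⁻¹ + (starRingEnd ℂ) z)‖ ^ q) := by
    intro n
    split_ifs with hcond
    · rw [← ENNReal.ofReal_mul (by positivity)]
      apply ENNReal.ofReal_le_ofReal
      obtain ⟨hcre, hcim⟩ := hcond
      have habs : ‖(lam n)⁻¹ + (starRingEnd ℂ) z‖ ≤ 2*r := by
        calc ‖(lam n)⁻¹ + (starRingEnd ℂ) z‖
            ≤ |((lam n)⁻¹ + (starRingEnd ℂ) z).re| + |((lam n)⁻¹ + (starRingEnd ℂ) z).im| :=
              Complex.norm_le_abs_re_add_abs_im _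
          _ ≤ 2*r := by
              rw [Complex.add_re, Complex.add_im, Complex.conj_re, Complex.conj_im, hzre,
                show z.im = ω from rfl]
              rw [abs_of_pos (by positivity : (0:ℝ) < ((lam n)⁻¹).re + r)]
              rw [show ((lam n)⁻¹).im + -ω = ((lam n)⁻¹).im - ω from by ring]
              have := abs_nonneg (((lam n)⁻¹).im - ω)
              linarith
      have hne2 : ((lam n)⁻¹ + (starRingEnd ℂ) z) ≠ 0 := by
        intro h
        have h0 : (((lam n)⁻¹ + (starRingEnd ℂ) z)).re = 0 := by rw [h]; rfl
        rw [Complex.add_re, Complex.conj_re, hzre] at h0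
        linarith
      have habspos : 0 < ‖(lam n)⁻¹ + (starRingEnd ℂ) z‖ :=
        norm_pos_iff.mpr hne2
      have hone : (1:ℝ) ≤ (2*r) * ‖1 / ((lam n)⁻¹ + (starRingEnd ℂ) z)‖ := by
        rw [norm_div, norm_one, mul_one_div, le_div_iff₀ habspos, one_mul]
        exact habs
      calc ‖b n / lam n‖ ^ q
          = ‖b n / lam n‖ ^ q * (1:ℝ) ^ (q:ℝ) := by rw [Real.one_rpow]; ring
        _ ≤ ‖b n / lam n‖ ^ q *
              ((2*r) * ‖1 / ((lam n)⁻¹ + (starRingEnd ℂ) z)‖) ^ (q:ℝ) := by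
            apply mul_le_mul_of_nonneg_left
              (Real.rpow_le_rpow zero_le_one hone hq0.le) (by positivity)
        _ = (2*r) ^ (q:ℝ) * (‖b n / lam n‖ ^ q *
              ‖1 / ((lam n)⁻¹ + (starRingEnd ℂ) z)‖ ^ q) := by
            rw [Real.mul_rpow (by positivity) (by positivity)]
            ring
    · exact zero_le
  have hre1 : r * r ^ (-(1/p')) = r ^ (1/p : ℝ) := by
    rw [show (1/p : ℝ) = 1 + -(1/p') from hp'el.symm, Real.rpow_add hr, Real.rpow_one]
  have hcomp : (2*r) ^ (q:ℝ) * (K * r ^ (-(1/p'))) ^ (q:ℝ) = (2*K) ^ (q:ℝ) * r ^ (1/α) := by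
    rw [← Real.mul_rpow (by positivity) (by positivity)]
    rw [show (2*r) * (K * r ^ (-(1/p'))) = (2*K) * (r * r ^ (-(1/p'))) from by ring]
    rw [hre1]
    rw [Real.mul_rpow (by positivity) (Real.rpow_nonneg hr.le _)]
    congr 1
    rw [← Real.rpow_mul hr.le]
    congr 1
    rw [hα, one_div_div]
    ring
  calc (∑' n : ℕ, if 0 < ((lam n)⁻¹).re ∧ |((lam n)⁻¹).im - ω| < r - ((lam n)⁻¹).re
        then ENNReal.ofReal (‖b n / lam n‖ ^ q) else 0)
      ≤ ∑' n : ℕ, ENNReal.ofReal ((2*r) ^ (q:ℝ)) *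
          ENNReal.ofReal (‖b n / lam n‖ ^ q *
            ‖1 / ((lam n)⁻¹ + (starRingEnd ℂ) z)‖ ^ q) :=
        ENNReal.tsum_le_tsum hpt2
    _ = ENNReal.ofReal ((2*r) ^ (q:ℝ)) * ∑' n : ℕ,
          ENNReal.ofReal (‖b n / lam n‖ ^ q *
            ‖1 / ((lam n)⁻¹ + (starRingEnd ℂ) z)‖ ^ q) :=
        ENNReal.tsum_mul_left
    _ ≤ ENNReal.ofReal ((2*r) ^ (q:ℝ)) * ENNReal.ofReal ((K * r ^ (-(1/p'))) ^ (q:ℝ)) :=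
        mul_le_mul_right hS _
    _ = ENNReal.ofReal ((2*r) ^ (q:ℝ) * (K * r ^ (-(1/p'))) ^ (q:ℝ)) :=
        (ENNReal.ofReal_mul (by positivity)).symm
    _ = ENNReal.ofReal ((2*K) ^ (q:ℝ) * r ^ (1/α)) := by rw [hcomp]
end

section
/- Let q ∈ (1,∞), and for each n let φ_n ∈ ℓ_{q'} (the dual of ℓ_q), b_n = ‖φ_n‖_{ℓ_{q'}}. Let (λ_n) ⊆ ℂ_+ and 1 < p ≤ q < ∞. Assume the scalar admissibility estimate (Σ_n b_n^q |∫_0^t e^{-λ_n(t-s)} v(s) ds|^q)^{1/q} ≤ C ‖v‖_{L^p(0,∞)} holds for all scalar v ∈ L^p(0,∞) and all t > 0. Then for all u ∈ L^p(0,∞; ℓ_q) and t > 0, (Σ_n |∫_0^t e^{-λ_n(t-s)} ⟨φ_n, u(s)⟩ ds|^q)^{1/q} ≤ C ‖u‖_{L^p(0,∞; ℓ_q)}. -/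
open MeasureTheory Real ENNReal intervalIntegral

lemma minkowski_tsum {α : Type*} [MeasurableSpace α] (μ : Measure α)
    (h : ℕ → α → ℝ≥0∞) (hm : ∀ j, AEMeasurable (h j) μ) {r : ℝ} (hr : 1 ≤ r) :
    ∑' j, (∫⁻ s, h j s ∂μ) ^ r ≤ (∫⁻ s, (∑' j, (h j s) ^ r) ^ (1/r) ∂μ) ^ r := by
  have hr0 : 0 < r := lt_of_lt_of_le one_pos hr
  rcases eq_or_lt_of_le hr with rfl | hr1
  · simp only [ENNReal.rpow_one, one_div_one]
    rw [lintegral_tsum hm]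
  have hpt : ∀ j s, h j s ≤ (∑' i, (h i s) ^ r) ^ (1/r) := by
    intro j s
    have h1 : (h j s) ^ r ≤ ∑' i, (h i s) ^ r := ENNReal.le_tsum j
    calc h j s = ((h j s) ^ r) ^ (1/r) := by
          rw [← ENNReal.rpow_mul, mul_one_div_cancel hr0.ne', ENNReal.rpow_one]
      _ ≤ (∑' i, (h i s) ^ r) ^ (1/r) :=
          ENNReal.rpow_le_rpow h1 (by positivity)
  set I := ∫⁻ s, (∑' j, (h j s) ^ r) ^ (1/r) ∂μ with hI
  by_cases hItop : I = ∞
  · rw [hItop, ENNReal.top_rpow_of_pos hr0]; exact le_top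
  have hFle : ∀ j, (∫⁻ s, h j s ∂μ) ≤ I := fun j =>
    lintegral_mono fun s => hpt j s
  have hFfin : ∀ j, (∫⁻ s, h j s ∂μ) ≠ ∞ := fun j =>
    (lt_of_le_of_lt (hFle j) (lt_top_iff_ne_top.mpr hItop)).ne
  rw [ENNReal.tsum_eq_iSup_sum]
  refine iSup_le fun A => ?_
  set F : ℕ → ℝ≥0∞ := fun j => ∫⁻ s, h j s ∂μ with hF
  set T : ℝ≥0∞ := ∑ j ∈ A, F j ^ r with hT
  have hTfin : T ≠ ∞ := by
    refine (ENNReal.sum_lt_top.mpr fun j _ => ?_).ne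
    exact ENNReal.rpow_lt_top_of_nonneg hr0.le (hFfin j)
  rcases eq_or_ne T 0 with hT0 | hT0
  · rw [hT0]; exact zero_le
  have hconj : r.HolderConjugate (Real.conjExponent r) :=
    Real.HolderConjugate.conjExponent hr1
  set r' := Real.conjExponent r with hr'
  have key : T ≤ I * T ^ (1/r') := by
    have step1 : T = ∑ j ∈ A, ∫⁻ s, h j s * F j ^ (r - 1) ∂μ := by
      refine Finset.sum_congr rfl fun j _ => ?_
      have e1 : F j ^ r = F j ^ (1:ℝ) * F j ^ (r - 1) := by
        rw [← ENNReal.rpow_add_of_nonneg _ _ zero_le_one (by linarith : (0:ℝ) ≤ r - 1)]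
        norm_num
      rw [lintegral_mul_const'' _ (hm j), e1, ENNReal.rpow_one]
    have step2 : ∑ j ∈ A, ∫⁻ s, h j s * F j ^ (r - 1) ∂μ
        = ∫⁻ s, ∑ j ∈ A, h j s * F j ^ (r - 1) ∂μ := by
      rw [lintegral_finset_sum' A fun j _ => (hm j).mul_const _]
    have step3 : ∀ s, ∑ j ∈ A, h j s * F j ^ (r - 1)
        ≤ (∑' i, (h i s) ^ r) ^ (1/r) * T ^ (1/r') := by
      intro s
      calc ∑ j ∈ A, h j s * F j ^ (r - 1)
          ≤ (∑ j ∈ A, (h j s) ^ r) ^ (1/r) * (∑ j ∈ A, (F j ^ (r - 1)) ^ r') ^ (1/r') :=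
            ENNReal.inner_le_Lp_mul_Lq A _ _ hconj
        _ ≤ (∑' i, (h i s) ^ r) ^ (1/r) * T ^ (1/r') := by
            refine mul_le_mul' (ENNReal.rpow_le_rpow (ENNReal.sum_le_tsum A)
              hconj.one_div_nonneg) (ENNReal.rpow_le_rpow (le_of_eq
              (Finset.sum_congr rfl fun j _ => ?_)) hconj.symm.one_div_nonneg)
            rw [← ENNReal.rpow_mul, hconj.sub_one_mul_conj]
    calc T = ∫⁻ s, ∑ j ∈ A, h j s * F j ^ (r - 1) ∂μ := by rw [step1, step2]
      _ ≤ ∫⁻ s, (∑' i, (h i s) ^ r) ^ (1/r) * T ^ (1/r') ∂μ := lintegral_mono step3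
      _ = I * T ^ (1/r') := lintegral_mul_const' _ _
            (ENNReal.rpow_ne_top_of_nonneg hconj.symm.one_div_nonneg hTfin)
  have hsplit : T = T ^ (1/r) * T ^ (1/r') := by
    rw [← ENNReal.rpow_add_of_nonneg _ _ hconj.one_div_nonneg hconj.symm.one_div_nonneg,
      one_div, one_div, hconj.inv_add_inv_eq_one, ENNReal.rpow_one]
  have hcancel : T ^ (1/r) ≤ I := by
    have hne : T ^ (1/r') ≠ 0 := by
      simp [ENNReal.rpow_eq_zero_iff, hT0, hTfin]
    have hnt : T ^ (1/r') ≠ ∞ :=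
      ENNReal.rpow_ne_top_of_nonneg hconj.symm.one_div_nonneg hTfin
    rw [← ENNReal.mul_le_mul_iff_left hne hnt, ← hsplit]
    exact key
  calc T = (T ^ (1/r)) ^ r := by
        rw [← ENNReal.rpow_mul, one_div_mul_cancel hr0.ne', ENNReal.rpow_one]
    _ ≤ I ^ r := ENNReal.rpow_le_rpow hcancel hr0.le

noncomputable def lpEval (Q : ℝ≥0∞) [Fact (1 ≤ Q)] (j : ℕ) :
    lp (fun _ : ℕ => ℂ) Q →L[ℂ] ℂ :=
  LinearMap.mkContinuous
    { toFun := fun f => f j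
      map_add' := fun f g => by simp
      map_smul' := fun c f => by simp }
    1 fun f => by
      have hQ0 : Q ≠ 0 := by
        intro h
        have := (Fact.out : (1:ℝ≥0∞) ≤ Q)
        simp [h] at this
      show ‖f j‖ ≤ 1 * ‖f‖
      simpa using lp.norm_apply_le_norm hQ0 f j

@[simp] lemma lpEval_apply (Q : ℝ≥0∞) [Fact (1 ≤ Q)] (j : ℕ)
    (f : lp (fun _ : ℕ => ℂ) Q) : lpEval Q j f = f j := rfl

/-- Extension of scalar admissibility to control operators on `ℓ_q`: let
`φ_n ∈ (ℓ_q)* = ℓ_{q'}`, `b_n = ‖φ_n‖`, and `1 < p ≤ q < ∞`.  If the scalar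
admissibility estimate
`(Σ_n b_n^q |∫_0^t e^{-λ_n(t-s)} v(s) ds|^q)^{1/q} ≤ C ‖v‖_{L^p(0,∞)}`
holds for all scalar `v` and all `t > 0`, then for every
`u ∈ L^p(0,∞; ℓ_q)`,
`(Σ_n |∫_0^t e^{-λ_n(t-s)} ⟨φ_n, u(s)⟩ ds|^q)^{1/q} ≤ C ‖u‖_{L^p(0,∞;ℓ_q)}`. -/
theorem stmt19 (p q : ℝ) (hp : 1 < p) (hpq : p ≤ q)
    [Fact (1 ≤ ENNReal.ofReal q)]
    (φ : ℕ → StrongDual ℂ (lp (fun _ : ℕ => ℂ) (ENNReal.ofReal q)))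
    (lam : ℕ → ℂ) (hre : ∀ n, 0 < (lam n).re) (C : ℝ) (hC : 0 < C)
    (hscalar : ∀ v : ℝ → ℂ,
      MemLp v (ENNReal.ofReal p) (volume.restrict (Set.Ioi (0:ℝ))) →
      ∀ t : ℝ, 0 < t →
      (∑' n : ℕ, ENNReal.ofReal (‖φ n‖ ^ q *
          ‖∫ s in (0:ℝ)..t, Complex.exp (-(lam n) * ((t - s : ℝ) : ℂ)) * v s‖ ^ q))
          ^ (1 / q) ≤
        ENNReal.ofReal C *
          eLpNorm v (ENNReal.ofReal p) (volume.restrict (Set.Ioi (0:ℝ)))) :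
    ∀ u : ℝ → lp (fun _ : ℕ => ℂ) (ENNReal.ofReal q),
      MemLp u (ENNReal.ofReal p) (volume.restrict (Set.Ioi (0:ℝ))) →
      ∀ t : ℝ, 0 < t →
      (∑' n : ℕ, ENNReal.ofReal
          (‖∫ s in (0:ℝ)..t, Complex.exp (-(lam n) * ((t - s : ℝ) : ℂ)) * (φ n) (u s)‖ ^ q))
          ^ (1 / q) ≤
        ENNReal.ofReal C *
          eLpNorm u (ENNReal.ofReal p) (volume.restrict (Set.Ioi (0:ℝ))) := by
  intro u hu t ht
  have hp0 : 0 < p := lt_trans one_pos hp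
  have hq1 : 1 < q := lt_of_lt_of_le hp hpq
  have hq0 : 0 < q := lt_trans one_pos hq1
  have hQt : (ENNReal.ofReal q).toReal = q := ENNReal.toReal_ofReal hq0.le
  have hPt : (ENNReal.ofReal p).toReal = p := ENNReal.toReal_ofReal hp0.le
  have hP1 : 1 ≤ ENNReal.ofReal p := ENNReal.one_le_ofReal.mpr hp.le
  set E : ℕ → ℝ → ℂ := fun n s => Complex.exp (-(lam n) * ((t - s : ℝ) : ℂ)) with hE
  -- integrability of E n • u on (0, t]
  have hres : MemLp u (ENNReal.ofReal p) (volume.restrict (Set.Ioc (0:ℝ) t)) := by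
    have h := hu.restrict (Set.Ioc (0:ℝ) t)
    rwa [Measure.restrict_restrict_of_subset Set.Ioc_subset_Ioi_self] at h
  have hfin : IsFiniteMeasure (volume.restrict (Set.Ioc (0:ℝ) t)) := ⟨by simp⟩
  have huInt : IntegrableOn u (Set.Ioc (0:ℝ) t) volume := hres.integrable hP1
  have hEb : ∀ n, ∀ s ∈ Set.Ioc (0:ℝ) t, ‖E n s‖ ≤ 1 := by
    intro n s hs
    rw [hE]
    simp only
    rw [Complex.norm_exp]
    rw [Real.exp_le_one_iff]
    have h2 : (-(lam n) * ((t - s : ℝ) : ℂ)).re = -(lam n).re * (t - s) := by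
      simp [Complex.mul_re]
    rw [h2]
    have h1 : 0 ≤ t - s := by linarith [hs.2]
    nlinarith [hre n]
  have hEcont : ∀ n, Continuous (E n) := by
    intro n
    exact Complex.continuous_exp.comp (by fun_prop)
  have hEmem : ∀ n, MemLp (E n) ∞ (volume.restrict (Set.Ioc (0:ℝ) t)) := fun n =>
    memLp_top_of_bound (hEcont n).aestronglyMeasurable 1
      ((ae_restrict_iff' measurableSet_Ioc).mpr (Filter.Eventually.of_forall (hEb n)))
  have hII : ∀ n, IntervalIntegrable (fun s => E n s • u s) volume 0 t := by
    intro n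
    rw [intervalIntegrable_iff_integrableOn_Ioc_of_le ht.le]
    exact huInt.smul_of_top_right (hEmem n)
  set J : ℕ → lp (fun _ : ℕ => ℂ) (ENNReal.ofReal q) :=
    fun n => ∫ s in (0:ℝ)..t, E n s • u s with hJ
  have hA : ∀ n, (∫ s in (0:ℝ)..t, E n s * φ n (u s)) = φ n (J n) := by
    intro n
    rw [hJ]
    rw [← ContinuousLinearMap.intervalIntegral_comp_comm (φ n) (hII n)]
    refine intervalIntegral.integral_congr fun s _ => ?_
    simp [smul_eq_mul]
  have hD : ∀ n j, (∫ s in (0:ℝ)..t, E n s * (u s : ∀ _ : ℕ, ℂ) j)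
      = (J n : ∀ _ : ℕ, ℂ) j := by
    intro n j
    rw [hJ]
    rw [← lpEval_apply (ENNReal.ofReal q) j,
      ← ContinuousLinearMap.intervalIntegral_comp_comm (lpEval (ENNReal.ofReal q) j) (hII n)]
    refine intervalIntegral.integral_congr fun s _ => ?_
    simp [smul_eq_mul]
  -- coordinate functions belong to L^p
  have hvmem : ∀ j : ℕ, MemLp (fun s => (u s : ∀ _ : ℕ, ℂ) j) (ENNReal.ofReal p)
      (volume.restrict (Set.Ioi (0:ℝ))) := by
    intro j
    exact (lpEval (ENNReal.ofReal q) j).comp_memLp' hu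
  have hsumm : ∀ f : lp (fun _ : ℕ => ℂ) (ENNReal.ofReal q),
      Summable fun j => ‖(f : ∀ _ : ℕ, ℂ) j‖ ^ q := by
    intro f
    have h := (lp.memℓp f).summable (p := ENNReal.ofReal q) (by rw [hQt]; exact hq0)
    rwa [hQt] at h
  have hnorm : ∀ f : lp (fun _ : ℕ => ℂ) (ENNReal.ofReal q),
      ‖f‖ ^ q = ∑' j, ‖(f : ∀ _ : ℕ, ℂ) j‖ ^ q := by
    intro f
    have h := lp.norm_rpow_eq_tsum (p := ENNReal.ofReal q) (by rw [hQt]; exact hq0) f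
    rwa [hQt] at h
  -- step 1 : dualize each term through the coordinates
  have step1 : ∀ n, ENNReal.ofReal (‖(φ n) (J n)‖ ^ q)
      ≤ ∑' j, ENNReal.ofReal (‖φ n‖ ^ q * ‖(J n : ∀ _ : ℕ, ℂ) j‖ ^ q) := by
    intro n
    have h1 : ‖(φ n) (J n)‖ ^ q ≤ ‖φ n‖ ^ q * ‖J n‖ ^ q := by
      rw [← Real.mul_rpow (norm_nonneg _) (norm_nonneg _)]
      exact Real.rpow_le_rpow (norm_nonneg _) ((φ n).le_opNorm (J n)) hq0.le
    calc ENNReal.ofReal (‖(φ n) (J n)‖ ^ q)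
        ≤ ENNReal.ofReal (‖φ n‖ ^ q * ‖J n‖ ^ q) := ENNReal.ofReal_le_ofReal h1
      _ = ENNReal.ofReal (∑' j, ‖φ n‖ ^ q * ‖(J n : ∀ _ : ℕ, ℂ) j‖ ^ q) := by
          rw [hnorm (J n), ← tsum_mul_left]
      _ = ∑' j, ENNReal.ofReal (‖φ n‖ ^ q * ‖(J n : ∀ _ : ℕ, ℂ) j‖ ^ q) :=
          ENNReal.ofReal_tsum_of_nonneg (fun j => by positivity) ((hsumm (J n)).mul_left _)
  -- step 3 : scalar admissibility applied to each coordinate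
  have step3 : ∀ j : ℕ, (∑' n, ENNReal.ofReal (‖φ n‖ ^ q * ‖(J n : ∀ _ : ℕ, ℂ) j‖ ^ q))
      ≤ (ENNReal.ofReal C * eLpNorm (fun s => (u s : ∀ _ : ℕ, ℂ) j) (ENNReal.ofReal p)
          (volume.restrict (Set.Ioi (0:ℝ)))) ^ q := by
    intro j
    have hsc := hscalar _ (hvmem j) t ht
    have h2 := ENNReal.rpow_le_rpow hsc hq0.le
    rw [← ENNReal.rpow_mul, one_div_mul_cancel hq0.ne', ENNReal.rpow_one] at h2
    refine le_trans (le_of_eq (tsum_congr fun n => ?_)) h2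
    rw [hD n j]
  -- combine
  have hSle : (∑' n, ENNReal.ofReal (‖(φ n) (J n)‖ ^ q))
      ≤ (ENNReal.ofReal C) ^ q *
        ∑' j, (eLpNorm (fun s => (u s : ∀ _ : ℕ, ℂ) j) (ENNReal.ofReal p)
          (volume.restrict (Set.Ioi (0:ℝ)))) ^ q := by
    calc (∑' n, ENNReal.ofReal (‖(φ n) (J n)‖ ^ q))
        ≤ ∑' n, ∑' j, ENNReal.ofReal (‖φ n‖ ^ q * ‖(J n : ∀ _ : ℕ, ℂ) j‖ ^ q) :=
          ENNReal.tsum_le_tsum step1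
      _ = ∑' j, ∑' n, ENNReal.ofReal (‖φ n‖ ^ q * ‖(J n : ∀ _ : ℕ, ℂ) j‖ ^ q) :=
          ENNReal.tsum_comm
      _ ≤ ∑' j, (ENNReal.ofReal C * eLpNorm (fun s => (u s : ∀ _ : ℕ, ℂ) j) (ENNReal.ofReal p)
            (volume.restrict (Set.Ioi (0:ℝ)))) ^ q := ENNReal.tsum_le_tsum step3
      _ = ∑' j, (ENNReal.ofReal C) ^ q * (eLpNorm (fun s => (u s : ∀ _ : ℕ, ℂ) j)
            (ENNReal.ofReal p) (volume.restrict (Set.Ioi (0:ℝ)))) ^ q :=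
          tsum_congr fun j => ENNReal.mul_rpow_of_nonneg _ _ hq0.le
      _ = (ENNReal.ofReal C) ^ q * ∑' j, (eLpNorm (fun s => (u s : ∀ _ : ℕ, ℂ) j)
            (ENNReal.ofReal p) (volume.restrict (Set.Ioi (0:ℝ)))) ^ q :=
          ENNReal.tsum_mul_left
  -- Minkowski step : Σ_j N_j^q ≤ (eLpNorm u)^q
  have hP0 : (ENNReal.ofReal p) ≠ 0 := (ENNReal.ofReal_pos.mpr hp0).ne'
  have hr1 : 1 ≤ q / p := (one_le_div hp0).mpr hpq
  have hmeasj : ∀ j, AEMeasurable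
      (fun s => (‖(u s : ∀ _ : ℕ, ℂ) j‖₊ : ℝ≥0∞) ^ p) (volume.restrict (Set.Ioi (0:ℝ))) :=
    fun j => ENNReal.continuous_rpow_const.measurable.comp_aemeasurable
      (hvmem j).1.enorm
  have hN : ∀ j : ℕ, (eLpNorm (fun s => (u s : ∀ _ : ℕ, ℂ) j) (ENNReal.ofReal p)
      (volume.restrict (Set.Ioi (0:ℝ)))) ^ q
      = (∫⁻ s, (‖(u s : ∀ _ : ℕ, ℂ) j‖₊ : ℝ≥0∞) ^ p ∂(volume.restrict (Set.Ioi (0:ℝ)))) ^ (q/p) := by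
    intro j
    rw [eLpNorm_eq_lintegral_rpow_enorm_toReal hP0 ENNReal.ofReal_ne_top, hPt, ← ENNReal.rpow_mul]
    congr 1
    field_simp
  have hpoint : ∀ s : ℝ, (∑' j, ((‖(u s : ∀ _ : ℕ, ℂ) j‖₊ : ℝ≥0∞) ^ p) ^ (q/p)) ^ (1/(q/p))
      = (‖u s‖₊ : ℝ≥0∞) ^ p := by
    intro s
    have e1 : ∀ j : ℕ, ((‖(u s : ∀ _ : ℕ, ℂ) j‖₊ : ℝ≥0∞) ^ p) ^ (q/p)
        = (‖(u s : ∀ _ : ℕ, ℂ) j‖₊ : ℝ≥0∞) ^ q := by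
      intro j
      rw [← ENNReal.rpow_mul]
      congr 1
      field_simp
    have ecoe : ∀ x : ℂ, (‖x‖₊ : ℝ≥0∞) ^ q = ENNReal.ofReal (‖x‖ ^ q) := by
      intro x
      rw [← enorm_eq_nnnorm, ← ofReal_norm, ENNReal.ofReal_rpow_of_nonneg (norm_nonneg _) hq0.le]
    have ecoe' : (‖u s‖₊ : ℝ≥0∞) ^ q = ENNReal.ofReal (‖u s‖ ^ q) := by
      rw [← enorm_eq_nnnorm, ← ofReal_norm, ENNReal.ofReal_rpow_of_nonneg (norm_nonneg _) hq0.le]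
    have e2 : (∑' j, (‖(u s : ∀ _ : ℕ, ℂ) j‖₊ : ℝ≥0∞) ^ q) = (‖u s‖₊ : ℝ≥0∞) ^ q := by
      calc (∑' j, (‖(u s : ∀ _ : ℕ, ℂ) j‖₊ : ℝ≥0∞) ^ q)
          = ∑' j, ENNReal.ofReal (‖(u s : ∀ _ : ℕ, ℂ) j‖ ^ q) := tsum_congr fun j => ecoe _
        _ = ENNReal.ofReal (∑' j, ‖(u s : ∀ _ : ℕ, ℂ) j‖ ^ q) :=
            (ENNReal.ofReal_tsum_of_nonneg (fun j => by positivity) (hsumm (u s))).symm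
        _ = ENNReal.ofReal (‖u s‖ ^ q) := by rw [← hnorm (u s)]
        _ = (‖u s‖₊ : ℝ≥0∞) ^ q := ecoe'.symm
    rw [tsum_congr e1, e2, ← ENNReal.rpow_mul]
    congr 1
    field_simp
  have hRHS : (∫⁻ s, (‖u s‖₊ : ℝ≥0∞) ^ p ∂(volume.restrict (Set.Ioi (0:ℝ)))) ^ (q/p)
      = (eLpNorm u (ENNReal.ofReal p) (volume.restrict (Set.Ioi (0:ℝ)))) ^ q := by
    rw [eLpNorm_eq_lintegral_rpow_enorm_toReal hP0 ENNReal.ofReal_ne_top, hPt, ← ENNReal.rpow_mul]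
    congr 1
    field_simp
  have hmink : (∑' j, (eLpNorm (fun s => (u s : ∀ _ : ℕ, ℂ) j) (ENNReal.ofReal p)
      (volume.restrict (Set.Ioi (0:ℝ)))) ^ q)
      ≤ (eLpNorm u (ENNReal.ofReal p) (volume.restrict (Set.Ioi (0:ℝ)))) ^ q := by
    rw [tsum_congr hN, ← hRHS]
    have h := minkowski_tsum (volume.restrict (Set.Ioi (0:ℝ)))
      (fun j s => (‖(u s : ∀ _ : ℕ, ℂ) j‖₊ : ℝ≥0∞) ^ p) hmeasj hr1
    refine le_trans h (le_of_eq ?_)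
    congr 1
    refine lintegral_congr fun s => ?_
    rw [hpoint s]
  -- final assembly
  have hfinal : (∑' n, ENNReal.ofReal (‖(φ n) (J n)‖ ^ q))
      ≤ (ENNReal.ofReal C *
          eLpNorm u (ENNReal.ofReal p) (volume.restrict (Set.Ioi (0:ℝ)))) ^ q := by
    rw [ENNReal.mul_rpow_of_nonneg _ _ hq0.le]
    exact le_trans hSle (mul_le_mul_right hmink _)
  have hgoal : (∑' n : ℕ, ENNReal.ofReal
      (‖∫ s in (0:ℝ)..t, Complex.exp (-(lam n) * ((t - s : ℝ) : ℂ)) * (φ n) (u s)‖ ^ q))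
      = ∑' n, ENNReal.ofReal (‖(φ n) (J n)‖ ^ q) := tsum_congr fun n => by rw [← hA n]
  rw [hgoal]
  calc (∑' n, ENNReal.ofReal (‖(φ n) (J n)‖ ^ q)) ^ (1/q)
      ≤ ((ENNReal.ofReal C *
          eLpNorm u (ENNReal.ofReal p) (volume.restrict (Set.Ioi (0:ℝ)))) ^ q) ^ (1/q) :=
        ENNReal.rpow_le_rpow hfinal (one_div_nonneg.mpr hq0.le)
    _ = ENNReal.ofReal C *
          eLpNorm u (ENNReal.ofReal p) (volume.restrict (Set.Ioi (0:ℝ))) := by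
        rw [← ENNReal.rpow_mul, mul_one_div_cancel hq0.ne', ENNReal.rpow_one]
end
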